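/- arXiv:0911.5661 — 9 statements merged into one kernel-verified Lean document; each statement's English description precedes it below -/
import Mathlib

section
/- For every subspace W ⊆ D one has V(W^⊥) = (F⁻¹(W))^⊥, where F⁻¹(W) denotes the preimage of W under F. -/
/-!
Since `⟨F x, y⟩ = ⟨x, V y⟩ ^ p`, the vector `F y` is orthogonal to `x` exactly when `y` is
orthogonal to `V x`. This gives `V (W^⊥) ⊆ (F⁻¹ W)^⊥` directly, and it identifies the
orthogonal of `L = span (im F)` with `ker V = im F`, so `L` is Lagrangian. Conversely, if
`z ⊥ F⁻¹ W` then `F z ⊥ im V = ker F`, hence `F z = 0` and `z = V x`. The same duality shows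
that `x` is orthogonal to `(L ⊔ W^⊥)^⊥ = L ⊓ W`, so `x ∈ L ⊔ W^⊥` by double orthogonality, and
`V` kills the `L`-component of `x`.
-/

open Submodule

namespace LinearMap.BilinForm

variable {K M : Type*} [Field K] [AddCommGroup M] [Module K M] {B : LinearMap.BilinForm K M}

def IsPowAdjointPair (B : LinearMap.BilinForm K M) (p : ℕ) (F V : M → M) : Prop :=
  ∀ x y, B (F x) y = B x (V y) ^ p

namespace IsPowAdjointPair

variable {p : ℕ} {F V : M → M}

theorem apply_eq_zero_iff (h : IsPowAdjointPair B p F V) (hp : p ≠ 0) {x y : M} :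
    B (F x) y = 0 ↔ B x (V y) = 0 := by
  rw [h, pow_eq_zero_iff hp]

theorem mem_orthogonal_span_range_iff (h : IsPowAdjointPair B p F V) (hp : p ≠ 0)
    (hB : LinearMap.SeparatingRight B) {y : M} :
    y ∈ B.orthogonal (span K (Set.range F)) ↔ V y = 0 :=
  calc y ∈ B.orthogonal (span K (Set.range F))
      ↔ span K (Set.range F) ≤ LinearMap.ker (B.flip y) := Iff.rfl
    _ ↔ ∀ s, B (F s) y = 0 := span_le.trans Set.range_subset_iff
    _ ↔ ∀ s, B s (V y) = 0 := forall_congr' fun _ ↦ h.apply_eq_zero_iff hp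
    _ ↔ V y = 0 := ⟨hB _, fun hVy s ↦ hVy ▸ map_zero (B s)⟩

theorem coe_orthogonal_span_range (h : IsPowAdjointPair B p F V) (hp : p ≠ 0)
    (hB : LinearMap.SeparatingRight B) (hFV : Set.range F = {x | V x = 0}) :
    (B.orthogonal (span K (Set.range F)) : Set M) = Set.range F := by
  ext y
  rw [SetLike.mem_coe, h.mem_orthogonal_span_range_iff hp hB, hFV]
  rfl

theorem span_range_le_orthogonal (h : IsPowAdjointPair B p F V) (hp : p ≠ 0)
    (hB : LinearMap.SeparatingRight B) (hFV : Set.range F = {x | V x = 0}) :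
    span K (Set.range F) ≤ B.orthogonal (span K (Set.range F)) :=
  span_le.2 (h.coe_orthogonal_span_range hp hB hFV).superset

theorem image_orthogonal_subset (h : IsPowAdjointPair B p F V) (hp : p ≠ 0) (hB : B.IsAlt)
    (W : Submodule K M) :
    V '' {x | ∀ y ∈ W, B x y = 0} ⊆ {x | ∀ y ∈ F ⁻¹' (W : Set M), B x y = 0} := by
  rintro _ ⟨x, hx, rfl⟩ y hy
  exact hB.eq_iff.1 ((h.apply_eq_zero_iff hp).1 (hB.eq_iff.1 (hx _ hy)))

theorem apply_eq_zero_of_orthogonal_preimage (h : IsPowAdjointPair B p F V) (hp : p ≠ 0)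
    (hB : LinearMap.SeparatingLeft B) (hVF : Set.range V = {x | F x = 0}) (W : Submodule K M)
    {z : M} (hz : ∀ y ∈ F ⁻¹' (W : Set M), B z y = 0) :
    F z = 0 := by
  refine hB _ fun y ↦ (h.apply_eq_zero_iff hp).2 (hz _ ?_)
  have hFVy : F (V y) = 0 := hVF.subset ⟨y, rfl⟩
  simp [hFVy]

theorem mem_span_range_sup_orthogonal [FiniteDimensional K M] (h : IsPowAdjointPair B p F V)
    (hp : p ≠ 0) (hB : B.IsAlt) (hBnd : B.Nondegenerate) (hFV : Set.range F = {x | V x = 0})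
    (W : Submodule K M) {x : M} (hx : ∀ y ∈ F ⁻¹' (W : Set M), B (V x) y = 0) :
    x ∈ span K (Set.range F) ⊔ B.orthogonal W := by
  rw [← orthogonal_orthogonal hBnd hB.isRefl (span K (Set.range F) ⊔ B.orthogonal W)]
  intro m hm
  obtain ⟨s, rfl⟩ : m ∈ Set.range F := by
    rw [← h.coe_orthogonal_span_range hp hBnd.2 hFV]
    exact fun n hn ↦ hm n (mem_sup_left hn)
  have hFs : F s ∈ W := by
    rw [← orthogonal_orthogonal hBnd hB.isRefl W]
    exact fun n hn ↦ hm n (mem_sup_right hn)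
  exact (h.apply_eq_zero_iff hp).2 (hB.eq_iff.1 (hx s hFs))

theorem image_orthogonal_eq [FiniteDimensional K M] (h : IsPowAdjointPair B p F V) (hp : p ≠ 0)
    (hB : B.IsAlt) (hBnd : B.Nondegenerate) (hVadd : ∀ x y, V (x + y) = V x + V y)
    (hVF : Set.range V = {x | F x = 0}) (hFV : Set.range F = {x | V x = 0}) (W : Submodule K M) :
    V '' {x | ∀ y ∈ W, B x y = 0} = {x | ∀ y ∈ F ⁻¹' (W : Set M), B x y = 0} := by
  refine (h.image_orthogonal_subset hp hB W).antisymm fun z hz ↦ ?_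
  obtain ⟨x, rfl⟩ : z ∈ Set.range V := by
    rw [hVF]
    exact h.apply_eq_zero_of_orthogonal_preimage hp hBnd.1 hVF W hz
  obtain ⟨u, hu, w, hw, rfl⟩ :=
    mem_sup.1 (h.mem_span_range_sup_orthogonal hp hB hBnd hFV W hz)
  have hVu : V u = 0 :=
    (h.mem_orthogonal_span_range_iff hp hBnd.2).1 (h.span_range_le_orthogonal hp hBnd.2 hFV hu)
  exact ⟨w, fun y hy ↦ hB.eq_iff.1 (hw y hy), by rw [hVadd, hVu, zero_add]⟩

end IsPowAdjointPair

end LinearMap.BilinForm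

theorem stmt0_general {p : ℕ} (hp : p.Prime) {𝔽 : Type*} [Field 𝔽]
    {D : Type*} [AddCommGroup D] [Module 𝔽 D] [FiniteDimensional 𝔽 D]
    (B : D →ₗ[𝔽] D →ₗ[𝔽] 𝔽)
    (halt : ∀ x, B x x = 0)
    (hnd : ∀ x, (∀ y, B x y = 0) → x = 0)
    (F V : D → D)
    (hVadd : ∀ x y, V (x + y) = V x + V y)
    (hVF : Set.range V = {x | F x = 0})
    (hFV : Set.range F = {x | V x = 0})
    (hpair : ∀ x y, B (F x) y = B x (V y) ^ p)
    (W : Submodule 𝔽 D) :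
    V '' {x | ∀ y ∈ W, B x y = 0} = {x | ∀ y ∈ F ⁻¹' (W : Set D), B x y = 0} := by
  have hB : B.IsAlt := halt
  have hBnd : B.Nondegenerate := hB.isRefl.nondegenerate_iff_separatingLeft.2 hnd
  exact LinearMap.BilinForm.IsPowAdjointPair.image_orthogonal_eq hpair hp.ne_zero hB hBnd
    hVadd hVF hFV W

/-- Let `𝔽` be an algebraically closed field of characteristic `p` with
Frobenius `σ (x) = x ^ p`, and let `D` be a finite-dimensional `𝔽`-vector space equipped with a
non-degenerate alternating bilinear form `B`, a `σ`-semilinear map `F` and a `σ⁻¹`-semilinear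
map `V` satisfying `im V = ker F`, `im F = ker V` and `⟨F x, y⟩ = ⟨x, V y⟩ ^ p`.
Then for every subspace `W ⊆ D` one has `V (W ^⊥) = (F⁻¹ (W)) ^⊥`. -/
theorem stmt0 {p : ℕ} (hp : p.Prime) {𝔽 : Type*} [Field 𝔽] [IsAlgClosed 𝔽] [CharP 𝔽 p]
    {D : Type*} [AddCommGroup D] [Module 𝔽 D] [FiniteDimensional 𝔽 D]
    (B : D →ₗ[𝔽] D →ₗ[𝔽] 𝔽)
    (halt : ∀ x, B x x = 0)
    (hnd : ∀ x, (∀ y, B x y = 0) → x = 0)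
    (F V : D → D)
    (hFadd : ∀ x y, F (x + y) = F x + F y)
    (hVadd : ∀ x y, V (x + y) = V x + V y)
    (hFsmul : ∀ (c : 𝔽) (x : D), F (c • x) = c ^ p • F x)
    (hVsmul : ∀ (c : 𝔽) (x : D), V (c ^ p • x) = c • V x)
    (hVF : Set.range V = {x | F x = 0})
    (hFV : Set.range F = {x | V x = 0})
    (hpair : ∀ x y, B (F x) y = B x (V y) ^ p)
    (W : Submodule 𝔽 D) :
    V '' {x | ∀ y ∈ W, B x y = 0} = {x | ∀ y ∈ F ⁻¹' (W : Set D), B x y = 0} :=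
  stmt0_general hp B halt hnd F V hVadd hVF hFV hpair W
end

section
/- Let w be a final permutation of {1,…,2g}. Then the number of indices i ∈ {1,…,g} with w(i) = g + i equals w(1) − 1. (In the paper this says: the p-rank on the Ekedahl–Oort stratum EO_w, which is #{i ∈ {1,…,g} : w(i) = g+i}, is equal to w(1) − 1.) -/
/-!
Write `a = w 0` (0-based indices). Strict monotonicity on the first half `[0, g)` gives
`w i ≤ g + i` there, and more generally `w i + (j - i) ≤ w j` for `i ≤ j < g`.
Since `a` is the least value taken on the first half, every value below `a` is taken on the
second half, so by the symmetry `w ∘ rev = rev ∘ w` the `a` largest values are taken on the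
first half, where `w⁻¹` is then increasing; this pins down `w i = g + i` for `g - a ≤ i < g`.
If instead `w i = g + i` for some `i < g - a`, then `w (g - a - 1) = 2g - 1 - a = w (rev 0)`,
contradicting injectivity.
-/

open Finset

theorem Fin.val_add_sub_le_of_strictMonoOn {n m : ℕ} {f : Fin n → Fin m} {i j : Fin n}
    (hij : i ≤ j) (hf : StrictMonoOn f (Set.Icc i j)) : (f i : ℕ) + (j - i) ≤ f j := by
  have hcard := card_le_card_of_injOn f (s := Icc i j) (t := Icc (f i) (f j))
    (fun k hk => ?_) (by simpa using hf.injOn)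
  · have hfij : f i ≤ f j := hf.monotoneOn ⟨le_rfl, hij⟩ ⟨hij, le_rfl⟩ hij
    rw [Fin.card_Icc, Fin.card_Icc] at hcard
    rw [Fin.le_def] at hij hfij
    omega
  · simp only [coe_Icc, Set.mem_Icc] at hk ⊢
    exact ⟨hf.monotoneOn ⟨le_rfl, hij⟩ hk hk.1, hf.monotoneOn hk ⟨hij, le_rfl⟩ hk.2⟩

namespace FinalPerm

variable {g : ℕ} {w : Equiv.Perm (Fin (2 * g))}

theorem apply_rev_eq_rev_apply
    (hsym : ∀ i : Fin (2 * g), ((w i : ℕ) + 1) + ((w i.rev : ℕ) + 1) = 2 * g + 1)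
    (i : Fin (2 * g)) : w i.rev = (w i).rev := by
  ext
  have := hsym i
  rw [Fin.val_rev]
  omega

theorem symm_apply_rev_eq_rev_symm_apply (hrev : ∀ i, w i.rev = (w i).rev) (v : Fin (2 * g)) :
    w.symm v.rev = (w.symm v).rev := by
  rw [Equiv.symm_apply_eq, hrev, Equiv.apply_symm_apply]

theorem apply_le_add (hmono : StrictMonoOn w {i | (i : ℕ) < g}) {i : Fin (2 * g)}
    (hi : (i : ℕ) < g) : (w i : ℕ) ≤ g + i := by
  have hlast : g - 1 < 2 * g := by omega
  have hsub := Fin.val_add_sub_le_of_strictMonoOn (f := w) (i := i) (j := ⟨g - 1, hlast⟩)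
    (Fin.le_def.mpr (show (i : ℕ) ≤ g - 1 by omega))
    (hmono.mono fun k hk => by
      simp only [Set.mem_Icc, Fin.le_def] at hk
      show (k : ℕ) < g
      omega)
  have := (w ⟨g - 1, hlast⟩).isLt
  simp only at hsub
  omega

theorem le_symm_apply_of_lt_apply_zero (hmono : StrictMonoOn w {i | (i : ℕ) < g})
    (h0 : 0 < 2 * g) {v : Fin (2 * g)} (hv : (v : ℕ) < w ⟨0, h0⟩) :
    g ≤ (w.symm v : ℕ) := by
  by_contra! hlt
  have := hmono.monotoneOn (a := ⟨0, h0⟩) (show 0 < g by omega) hlt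
    (Fin.le_def.mpr (Nat.zero_le _))
  rw [Equiv.apply_symm_apply, Fin.le_def] at this
  omega

theorem symm_apply_lt_of_rev_lt_apply_zero (hrev : ∀ i, w i.rev = (w i).rev)
    (hmono : StrictMonoOn w {i | (i : ℕ) < g}) (h0 : 0 < 2 * g) {v : Fin (2 * g)}
    (hv : (v.rev : ℕ) < w ⟨0, h0⟩) : (w.symm v : ℕ) < g := by
  have := le_symm_apply_of_lt_apply_zero hmono h0 hv
  rw [symm_apply_rev_eq_rev_symm_apply hrev, Fin.val_rev] at this
  omega

theorem strictMonoOn_symm (hrev : ∀ i, w i.rev = (w i).rev)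
    (hmono : StrictMonoOn w {i | (i : ℕ) < g}) (h0 : 0 < 2 * g) :
    StrictMonoOn w.symm {v | (v.rev : ℕ) < w ⟨0, h0⟩} := fun u hu v hv huv => by
  rwa [← hmono.lt_iff_lt (symm_apply_lt_of_rev_lt_apply_zero hrev hmono h0 hu)
    (symm_apply_lt_of_rev_lt_apply_zero hrev hmono h0 hv), Equiv.apply_symm_apply,
    Equiv.apply_symm_apply]

theorem apply_eq_add_of_sub_apply_zero_le (hrev : ∀ i, w i.rev = (w i).rev)
    (hmono : StrictMonoOn w {i | (i : ℕ) < g}) (h0 : 0 < 2 * g) {i : Fin (2 * g)}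
    (hi : (i : ℕ) < g) (hle : g - w ⟨0, h0⟩ ≤ (i : ℕ)) : (w i : ℕ) = g + i := by
  obtain ⟨v, hv⟩ : ∃ v : Fin (2 * g), (v : ℕ) = g + i := ⟨⟨g + i, by omega⟩, rfl⟩
  obtain ⟨last, hlast⟩ : ∃ u : Fin (2 * g), (u : ℕ) = 2 * g - 1 :=
    ⟨⟨2 * g - 1, by omega⟩, rfl⟩
  -- `w⁻¹` increases on the values `g + i, …, 2g - 1` and lands in `[0, g)`, so `w⁻¹ v ≤ i`
  have hsub := Fin.val_add_sub_le_of_strictMonoOn (i := v) (j := last) (Fin.le_def.mpr (by omega))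
    ((strictMonoOn_symm hrev hmono h0).mono fun u hu => by
      simp only [Set.mem_Icc, Fin.le_def] at hu
      simp only [Set.mem_ofPred_eq, Fin.val_rev]
      omega)
  have hp := symm_apply_lt_of_rev_lt_apply_zero hrev hmono h0 (v := v) (by rw [Fin.val_rev]; omega)
  have hq := symm_apply_lt_of_rev_lt_apply_zero hrev hmono h0 (v := last)
    (by rw [Fin.val_rev]; omega)
  have hbound := apply_le_add hmono hp
  rw [Equiv.apply_symm_apply] at hbound
  have hpi : w.symm v = i := Fin.ext (by omega)
  rw [← hv, ← hpi, Equiv.apply_symm_apply]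

theorem sub_apply_zero_le_of_apply_eq_add (hrev : ∀ i, w i.rev = (w i).rev)
    (hmono : StrictMonoOn w {i | (i : ℕ) < g}) (h0 : 0 < 2 * g) {i : Fin (2 * g)}
    (hi : (i : ℕ) < g) (heq : (w i : ℕ) = g + i) : g - w ⟨0, h0⟩ ≤ (i : ℕ) := by
  by_contra! hlt
  obtain ⟨j, hj⟩ : ∃ j : Fin (2 * g), (j : ℕ) = g - w ⟨0, h0⟩ - 1 :=
    ⟨⟨_, by omega⟩, rfl⟩
  have hsub := Fin.val_add_sub_le_of_strictMonoOn (i := i) (j := j) (Fin.le_def.mpr (by omega))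
    (hmono.mono fun k hk => by
      simp only [Set.mem_Icc, Fin.le_def] at hk
      show (k : ℕ) < g
      omega)
  have hbound := apply_le_add hmono (i := j) (by omega)
  have hwj : w j = w (⟨0, h0⟩ : Fin (2 * g)).rev := by
    rw [hrev]
    ext
    rw [Fin.val_rev]
    omega
  have := congrArg Fin.val (w.injective hwj)
  simp only [Fin.val_rev] at this
  omega

end FinalPerm

/-- Let `w` be a final permutation of `{1, …, 2g}` (here modelled on
`Fin (2*g)` with the `0`-based index `i` corresponding to `i + 1`): final means
`w (i) + w (2g+1-i) = 2g+1` for all `i` and `w (1) < w (2) < ⋯ < w (g)`.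
Then `#{i ∈ {1, …, g} : w (i) = g + i} = w (1) - 1`. -/
theorem stmt3 (g : ℕ) (hg : 1 ≤ g) (w : Equiv.Perm (Fin (2 * g)))
    (hsym : ∀ i : Fin (2 * g), ((w i : ℕ) + 1) + ((w i.rev : ℕ) + 1) = 2 * g + 1)
    (hmono : ∀ i j : Fin (2 * g), i < j → (j : ℕ) < g → w i < w j) :
    (Finset.univ.filter
        (fun i : Fin (2 * g) => (i : ℕ) < g ∧ (w i : ℕ) = g + (i : ℕ))).card
      = (w ⟨0, by omega⟩ : ℕ) := by
  have h0 : 0 < 2 * g := by omega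
  have hrev := FinalPerm.apply_rev_eq_rev_apply hsym
  have hmonoOn : StrictMonoOn w {i | (i : ℕ) < g} := fun i _ j hj hij => hmono i j hij hj
  have ha : (w ⟨0, h0⟩ : ℕ) ≤ g :=
    FinalPerm.apply_le_add hmonoOn (i := ⟨0, h0⟩) (show 0 < g by omega)
  have hfilter : univ.filter (fun i : Fin (2 * g) => (i : ℕ) < g ∧ (w i : ℕ) = g + i) =
      Ico ⟨g - w ⟨0, h0⟩, by omega⟩ ⟨g, by omega⟩ := by
    ext i
    simp only [mem_filter, mem_univ, true_and, mem_Ico, Fin.le_def, Fin.lt_def]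
    exact ⟨fun ⟨hi, heq⟩ =>
        ⟨FinalPerm.sub_apply_zero_le_of_apply_eq_add hrev hmonoOn h0 hi heq, hi⟩,
      fun ⟨hle, hi⟩ =>
        ⟨hi, FinalPerm.apply_eq_add_of_sub_apply_zero_le hrev hmonoOn h0 hi hle⟩⟩
  rw [hfilter, Fin.card_Ico]
  simp only
  omega
end

section
/- For a final permutation w of {1,…,2g} define ψ_w : {0,…,2g} → ℕ by ψ_w(i) = i − #{a ∈ {1,…,g} : w(a) ≤ i} for 0 ≤ i ≤ g and ψ_w(2g−i) = ψ_w(i) + g − i for 0 ≤ i ≤ g. Then ψ_w is a final sequence of length g, and the assignment w ↦ ψ_w is a bijection from the set of final permutations of {1,…,2g} onto the set of final sequences of length g. -/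
/-- A permutation `w` of `{1, …, 2g}` (modelled on `Fin (2*g)`, `0`-based index `i`
corresponding to `i + 1`) is *final* if `w (i) + w (2g+1-i) = 2g+1` for all `i` and
`w (1) < w (2) < ⋯ < w (g)`. -/
def IsFinalPerm (g : ℕ) (w : Equiv.Perm (Fin (2 * g))) : Prop :=
  (∀ i : Fin (2 * g), ((w i : ℕ) + 1) + ((w i.rev : ℕ) + 1) = 2 * g + 1) ∧
  (∀ i j : Fin (2 * g), i < j → (j : ℕ) < g → w i < w j)

/-- A *final sequence* of length `g` is a map `ψ : {0, …, 2g} → ℕ` with `ψ 0 = 0`,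
`ψ (2g) = g`, `ψ i ≤ ψ (i+1) ≤ ψ i + 1` and `(ψ i < ψ (i+1) ↔ ψ (2g-i) = ψ (2g-i-1))`
for all `0 ≤ i < 2g`. -/
def IsFinalSeq (g : ℕ) (ψ : Fin (2 * g + 1) → ℕ) : Prop :=
  ψ ⟨0, by omega⟩ = 0 ∧ ψ ⟨2 * g, by omega⟩ = g ∧
  ∀ i : ℕ, ∀ _ : i < 2 * g,
    ψ ⟨i, by omega⟩ ≤ ψ ⟨i + 1, by omega⟩ ∧
    ψ ⟨i + 1, by omega⟩ ≤ ψ ⟨i, by omega⟩ + 1 ∧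
    (ψ ⟨i, by omega⟩ < ψ ⟨i + 1, by omega⟩ ↔
      ψ ⟨2 * g - i, by omega⟩ = ψ ⟨2 * g - i - 1, by omega⟩)

/-- The sequence `ψ_w` associated with a final permutation `w`:
`ψ_w (i) = i - #{a ∈ {1, …, g} : w (a) ≤ i}` for `0 ≤ i ≤ g`, and
`ψ_w (2g - i) = ψ_w (i) + g - i` for `0 ≤ i ≤ g`. -/
def psiOfPerm (g : ℕ) (w : Equiv.Perm (Fin (2 * g))) (i : ℕ) : ℕ :=
  if i ≤ g then
    i - (Finset.univ.filter
      (fun a : Fin (2 * g) => (a : ℕ) < g ∧ (w a : ℕ) + 1 ≤ i)).card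
  else
    ((2 * g - i) - (Finset.univ.filter
      (fun a : Fin (2 * g) => (a : ℕ) < g ∧ (w a : ℕ) + 1 ≤ 2 * g - i)).card) + (i - g)

/-! Both sides are in bijection with the subsets `S` of `{1, …, 2g}` containing exactly one
element of each pair `{v, 2g+1-v}`. A final permutation `w` corresponds to `S = w({1, …, g})`:
its first `g` values list `S` increasingly and the others are forced by the symmetry of `w`.
A final sequence `ψ` corresponds to the set of its flat steps `ψ(v-1) = ψ(v)`, and conversely
`ψ(i) = #{v ≤ i | v ∉ S}`; the condition linking the steps at `i` and `2g-i` is exactly the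
pairing condition on `S`. The pairing also gives `ψ(2g-i) = ψ(i) + g - i`, so `ψ_w` is the
counting function of `w({1, …, g})`. -/

open Finset

section RevTransversal

variable {n : ℕ}

def IsRevTransversal (T : Finset (Fin n)) : Prop := ∀ v, v ∈ T ↔ v.rev ∉ T

def countComplBelow (T : Finset (Fin n)) (i : ℕ) : ℕ := #{v ∈ Tᶜ | v.val < i}

@[simp]
lemma countComplBelow_zero (T : Finset (Fin n)) : countComplBelow T 0 = 0 := by
  simp [countComplBelow]

lemma countComplBelow_succ (T : Finset (Fin n)) {i : ℕ} (hi : i < n) :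
    countComplBelow T (i + 1) = countComplBelow T i + if ⟨i, hi⟩ ∈ T then 0 else 1 := by
  have hsplit :
      {v ∈ Tᶜ | v.val < i + 1} = {v ∈ Tᶜ | v.val < i} ∪ {v ∈ Tᶜ | v = ⟨i, hi⟩} := by
    ext v
    simp only [mem_union, mem_filter, Fin.ext_iff, Nat.lt_succ_iff_lt_or_eq]
    tauto
  rw [countComplBelow, hsplit, card_union_of_disjoint, filter_eq']
  · split_ifs <;> simp_all [countComplBelow]
  · exact disjoint_filter.2 fun v _ hlt heq => by simp [heq] at hlt

lemma countComplBelow_add_card_filter_lt (T : Finset (Fin n)) {i : ℕ} (hi : i ≤ n) :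
    countComplBelow T i + #{v ∈ T | v.val < i} = i := by
  have h := card_filter_add_card_filter_not (s := ({v | v.val < i} : Finset (Fin n))) (· ∈ T)
  rw [Fin.card_filter_val_lt, min_eq_right hi] at h
  conv_rhs => rw [← h, add_comm]
  rw [countComplBelow]
  congr 1 <;> congr 1 <;> ext v <;> simp [and_comm]

lemma mem_iff_countComplBelow_succ_eq (T : Finset (Fin n)) {i : ℕ} (hi : i < n) :
    ⟨i, hi⟩ ∈ T ↔ countComplBelow T (i + 1) = countComplBelow T i := by
  rw [countComplBelow_succ T hi]
  split_ifs <;> simp_all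

lemma countComplBelow_injective :
    Function.Injective fun (T : Finset (Fin n)) (i : Fin (n + 1)) => countComplBelow T i := by
  intro T T' h
  ext v
  have h' (i : ℕ) (hi : i ≤ n) : countComplBelow T i = countComplBelow T' i :=
    congrFun h ⟨i, by omega⟩
  rw [mem_iff_countComplBelow_succ_eq T v.2, mem_iff_countComplBelow_succ_eq T' v.2,
    h' v v.2.le, h' (v + 1) v.2]

lemma IsRevTransversal.mem_iff {T : Finset (Fin n)} (hT : IsRevTransversal T) {i : ℕ}
    (hi : i < n) : (⟨n - 1 - i, by omega⟩ : Fin n) ∈ T ↔ ⟨i, hi⟩ ∉ T := by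
  have hrev : Fin.rev ⟨i, hi⟩ = ⟨n - 1 - i, by omega⟩ := Fin.ext (by simp; omega)
  rw [← hrev]
  have := hT ⟨i, hi⟩
  tauto

end RevTransversal

section FinalSeq

variable {g : ℕ} {T : Finset (Fin (2 * g))}

lemma IsRevTransversal.card_eq (hT : IsRevTransversal T) : #T = g := by
  have h := card_equiv Fin.revPerm (s := T) (t := Tᶜ) fun v => by simpa using hT v
  have := card_compl T
  have := card_le_univ T
  simp only [Fintype.card_fin] at *
  omega

lemma IsRevTransversal.countComplBelow_two_mul_sub (hT : IsRevTransversal T) {j : ℕ}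
    (hj : j ≤ g) : countComplBelow T (2 * g - j) = countComplBelow T j + (g - j) := by
  induction hj using Nat.decreasingInduction with
  | self => rw [show 2 * g - g = g by omega, Nat.sub_self, Nat.add_zero]
  | of_succ j hj ih =>
    have hfar := countComplBelow_succ T (i := 2 * g - 1 - j) (by omega)
    have hnear := countComplBelow_succ T (i := j) (by omega)
    rw [show 2 * g - 1 - j + 1 = 2 * g - j by omega] at hfar
    simp only [hT.mem_iff (i := j) (by omega)] at hfar
    rw [show 2 * g - (j + 1) = 2 * g - 1 - j by omega] at ih
    split_ifs at hfar hnear <;> omega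

lemma IsRevTransversal.isFinalSeq (hT : IsRevTransversal T) :
    IsFinalSeq g fun i => countComplBelow T i := by
  refine ⟨countComplBelow_zero T, by simpa using hT.countComplBelow_two_mul_sub g.zero_le,
    fun i hi => ?_⟩
  have hnear := countComplBelow_succ T hi
  have hfar := countComplBelow_succ T (i := 2 * g - 1 - i) (by omega)
  rw [show 2 * g - 1 - i + 1 = 2 * g - i by omega] at hfar
  simp only [hT.mem_iff (i := i) hi] at hfar
  dsimp only
  rw [show 2 * g - i - 1 = 2 * g - 1 - i by omega]
  split_ifs at hfar hnear <;> omega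

lemma exists_isRevTransversal_of_isFinalSeq {ψ : Fin (2 * g + 1) → ℕ} (hψ : IsFinalSeq g ψ) :
    ∃ T : Finset (Fin (2 * g)),
      IsRevTransversal T ∧ (fun i : Fin (2 * g + 1) => countComplBelow T i) = ψ := by
  obtain ⟨f, rfl⟩ : ∃ f : ℕ → ℕ, ψ = fun i : Fin (2 * g + 1) => f i :=
    ⟨fun i => ψ (Fin.ofNat _ i), funext fun i => by simp⟩
  obtain ⟨h0, -, hstep⟩ := hψ
  dsimp only at h0 hstep
  let T : Finset (Fin (2 * g)) := {v | f (v + 1) = f v}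
  have hmem : ∀ v : Fin (2 * g), v ∈ T ↔ f (v + 1) = f v := by simp [T]
  refine ⟨T, fun v => ?_, funext fun i => ?_⟩
  · have := hstep v v.2
    rw [hmem, hmem, Fin.val_rev, show 2 * g - (v + 1) + 1 = 2 * g - v by omega,
      show 2 * g - (v + 1) = 2 * g - v - 1 by omega]
    omega
  · obtain ⟨i, hi⟩ := i
    show countComplBelow T i = f i
    induction i with
    | zero => exact (countComplBelow_zero T).trans h0.symm
    | succ i ih =>
      have := hstep i (by omega)
      rw [countComplBelow_succ T (by omega), ih (by omega)]
      simp only [hmem]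
      split_ifs <;> omega

end FinalSeq

section FinalPerm

variable {g : ℕ} {w : Equiv.Perm (Fin (2 * g))}

lemma isFinalPerm_sum_eq_iff {i : Fin (2 * g)} :
    ((w i : ℕ) + 1) + ((w i.rev : ℕ) + 1) = 2 * g + 1 ↔ w i.rev = (w i).rev := by
  have := (w i).2
  have := (w i.rev).2
  rw [Fin.ext_iff, Fin.val_rev]
  omega

lemma IsFinalPerm.map_rev (hw : IsFinalPerm g w) (i : Fin (2 * g)) : w i.rev = (w i).rev :=
  isFinalPerm_sum_eq_iff.mp (hw.1 i)

lemma IsFinalPerm.symm_rev (hw : IsFinalPerm g w) (v : Fin (2 * g)) :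
    w.symm v.rev = (w.symm v).rev :=
  w.injective (by rw [hw.map_rev, Equiv.apply_symm_apply, Equiv.apply_symm_apply])

def firstHalfValues (g : ℕ) (w : Equiv.Perm (Fin (2 * g))) : Finset (Fin (2 * g)) :=
  {v | (w.symm v : ℕ) < g}

lemma IsFinalPerm.isRevTransversal (hw : IsFinalPerm g w) :
    IsRevTransversal (firstHalfValues g w) := by
  intro v
  have := (w.symm v).2
  simp only [firstHalfValues, mem_filter, mem_univ, true_and, hw.symm_rev, Fin.val_rev]
  omega

lemma IsFinalPerm.psiOfPerm_eq (hw : IsFinalPerm g w) {i : ℕ} (hi : i ≤ 2 * g) :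
    psiOfPerm g w i = countComplBelow (firstHalfValues g w) i := by
  have hcount (j : ℕ) (hj : j ≤ g) :
      j - #{a : Fin (2 * g) | (a : ℕ) < g ∧ (w a : ℕ) + 1 ≤ j} =
        countComplBelow (firstHalfValues g w) j := by
    have := countComplBelow_add_card_filter_lt (firstHalfValues g w) (i := j) (by omega)
    have hcard : #{a : Fin (2 * g) | (a : ℕ) < g ∧ (w a : ℕ) + 1 ≤ j} =
        #{v ∈ firstHalfValues g w | v.val < j} :=
      card_equiv w fun a => by simp [firstHalfValues]
    omega
  unfold psiOfPerm
  split_ifs with h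
  · exact hcount i h
  · rw [hcount _ (by omega), show i - g = g - (2 * g - i) by omega,
      ← hw.isRevTransversal.countComplBelow_two_mul_sub (by omega),
      show 2 * g - (2 * g - i) = i by omega]

lemma IsFinalPerm.strictMono_firstHalf (hw : IsFinalPerm g w) :
    StrictMono fun a : Fin g => w (a.castLE (by omega)) :=
  fun _ b hab => hw.2 _ _ hab b.2

lemma range_firstHalf :
    Set.range (fun a : Fin g => w (a.castLE (by omega))) = firstHalfValues g w := by
  ext v
  simp only [Set.mem_range, firstHalfValues, coe_filter, mem_univ, true_and, Set.mem_ofPred_eq]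
  constructor
  · rintro ⟨a, rfl⟩
    simp
  · intro hv
    exact ⟨⟨_, hv⟩, by simp⟩

lemma injOn_firstHalfValues : Set.InjOn (firstHalfValues g) {w | IsFinalPerm g w} := by
  intro w hw w' hw' h
  have hhalf := ((hw.strictMono_firstHalf).range_inj hw'.strictMono_firstHalf).mp
    (by rw [range_firstHalf, range_firstHalf, h])
  have hlow (a : Fin (2 * g)) (ha : (a : ℕ) < g) : w a = w' a := congrFun hhalf ⟨a, ha⟩
  ext1 a
  by_cases ha : (a : ℕ) < g
  · exact hlow a ha
  · rw [← a.rev_rev, hw.map_rev, hw'.map_rev, hlow a.rev (by rw [Fin.val_rev]; omega)]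

end FinalPerm

section PermOfTransversal

variable {g : ℕ}

def foldHalf (a : Fin (2 * g)) : Fin g := ⟨min a (2 * g - 1 - a), by omega⟩

lemma foldHalf_rev (a : Fin (2 * g)) : foldHalf a.rev = foldHalf a := by
  simp only [foldHalf, Fin.val_rev, Fin.mk.injEq]
  omega

lemma eq_of_foldHalf_eq {a b : Fin (2 * g)} (h : foldHalf a = foldHalf b)
    (hab : (a : ℕ) < g ↔ (b : ℕ) < g) : a = b := by
  simp only [foldHalf, Fin.mk.injEq] at h
  omega

lemma IsRevTransversal.exists_isFinalPerm {T : Finset (Fin (2 * g))} (hT : IsRevTransversal T) :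
    ∃ w : Equiv.Perm (Fin (2 * g)), IsFinalPerm g w ∧ firstHalfValues g w = T := by
  let e := T.orderEmbOfFin hT.card_eq
  let f (a : Fin (2 * g)) : Fin (2 * g) :=
    if (a : ℕ) < g then e (foldHalf a) else (e (foldHalf a)).rev
  have hmem (a : Fin (2 * g)) : f a ∈ T ↔ (a : ℕ) < g := by
    have he : e (foldHalf a) ∈ T := T.orderEmbOfFin_mem hT.card_eq _
    by_cases ha : (a : ℕ) < g
    · simpa [f, ha] using he
    · simpa [f, ha] using (hT _).mp he
  have hinj : Function.Injective f := by
    intro a b hab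
    have hlt : (a : ℕ) < g ↔ (b : ℕ) < g := by rw [← hmem, ← hmem, hab]
    refine eq_of_foldHalf_eq (e.injective ?_) hlt
    by_cases ha : (a : ℕ) < g
    · simpa [f, ha, hlt.mp ha] using hab
    · simpa [f, ha, mt hlt.mpr ha] using hab
  let w := Equiv.ofBijective f (Finite.injective_iff_bijective.mp hinj)
  refine ⟨w, ⟨fun i => isFinalPerm_sum_eq_iff.mpr ?_, fun i j hij hj => ?_⟩, ?_⟩
  · have hrev : (i.rev : ℕ) < g ↔ ¬ (i : ℕ) < g := by rw [Fin.val_rev]; omega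
    simp only [w, f, Equiv.ofBijective_apply, foldHalf_rev, hrev]
    split_ifs <;> simp
  · have hfold : foldHalf i < foldHalf j := by
      simp only [foldHalf, Fin.mk_lt_mk]
      omega
    simpa [w, f, hj, Nat.lt_trans hij hj] using e.strictMono hfold
  · ext v
    simp only [firstHalfValues, mem_filter, mem_univ, true_and]
    rw [← hmem, show f (w.symm v) = v from w.apply_symm_apply v]

end PermOfTransversal

theorem bijOn_firstHalfValues (g : ℕ) :
    Set.BijOn (firstHalfValues g) {w | IsFinalPerm g w} {T | IsRevTransversal T} :=
  ⟨fun _ hw => IsFinalPerm.isRevTransversal hw, injOn_firstHalfValues,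
    fun _ hT => IsRevTransversal.exists_isFinalPerm hT⟩

theorem bijOn_countComplBelow (g : ℕ) :
    Set.BijOn (fun (T : Finset (Fin (2 * g))) (i : Fin (2 * g + 1)) => countComplBelow T i)
      {T | IsRevTransversal T} {ψ | IsFinalSeq g ψ} :=
  ⟨fun _ hT => IsRevTransversal.isFinalSeq hT, countComplBelow_injective.injOn,
    fun _ hψ => exists_isRevTransversal_of_isFinalSeq hψ⟩

theorem stmt4_general (g : ℕ) :
    Set.BijOn (fun w : Equiv.Perm (Fin (2 * g)) =>
        fun i : Fin (2 * g + 1) => psiOfPerm g w (i : ℕ))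
      {w | IsFinalPerm g w} {ψ | IsFinalSeq g ψ} :=
  ((bijOn_countComplBelow g).comp (bijOn_firstHalfValues g)).congr fun _ hw =>
    funext fun i => (hw.psiOfPerm_eq (by omega)).symm

/-- For every final permutation `w`, the sequence `ψ_w` is a final sequence
of length `g`, and `w ↦ ψ_w` is a bijection from the set of final permutations of
`{1, …, 2g}` onto the set of final sequences of length `g`. -/
theorem stmt4 (g : ℕ) (hg : 1 ≤ g) :
    Set.BijOn (fun w : Equiv.Perm (Fin (2 * g)) =>
        fun i : Fin (2 * g + 1) => psiOfPerm g w (i : ℕ))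
      {w | IsFinalPerm g w} {ψ | IsFinalSeq g ψ} :=
  stmt4_general g
end

section
/- Let 𝔽 be an algebraically closed field of characteristic p > 0 with Frobenius σ(x) = x^p, and let W be a nonzero finite-dimensional 𝔽-vector space. Let F : W → W be a σ-semilinear map and V : W → W a σ⁻¹-semilinear map such that both F and V are nilpotent (some iterate is the zero map), im V ⊆ ker F, and im F ⊆ ker V. Then ker F ∩ ker V ≠ 0. -/
/-- If `V` is nilpotent, kills the image of `V` under `F` is zero (`F ∘ V = 0`),
`V 0 = 0`, and `V x ≠ 0` for some `x`, then the last nonzero iterate of `V` on `x`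
is killed by both `F` and `V`. -/
lemma stmt9_aux {W : Type*} [Zero W] (F V : W → W) (hV0 : V 0 = 0)
    (hVnil : ∃ n : ℕ, ∀ x, V^[n] x = 0) (hVF : ∀ x, F (V x) = 0)
    (x : W) (hx : V x ≠ 0) :
    ∃ z : W, z ≠ 0 ∧ F z = 0 ∧ V z = 0 := by
  classical
  obtain ⟨n, hn⟩ := hVnil
  have hex : ∃ m, V^[m] x = 0 := ⟨n, hn x⟩
  set m := Nat.find hex with hm
  have hm0 : V^[m] x = 0 := Nat.find_spec hex
  have hm2 : 2 ≤ m := by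
    by_contra h
    push_neg at h
    interval_cases m
    · simp only [Function.iterate_zero, id_eq] at hm0
      exact hx (hm0 ▸ hV0)
    · simp only [Function.iterate_one] at hm0
      exact hx hm0
  refine ⟨V^[m - 1] x, Nat.find_min hex (by omega), ?_, ?_⟩
  · have h1 : m - 1 = (m - 2) + 1 := by omega
    rw [h1, Function.iterate_succ_apply']
    exact hVF _
  · have h1 : m = (m - 1) + 1 := by omega
    rw [h1, Function.iterate_succ_apply'] at hm0
    exact hm0

/-- Let `𝔽` be an algebraically closed field of characteristic `p > 0`
with Frobenius `σ (x) = x ^ p`, and let `W` be a nonzero finite-dimensional `𝔽`-vector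
space. Let `F : W → W` be `σ`-semilinear and `V : W → W` be `σ⁻¹`-semilinear
(expressed via `V (c ^ p • x) = c • V x`, which is equivalent since Frobenius is bijective),
both nilpotent, with `im V ⊆ ker F` and `im F ⊆ ker V`. Then `ker F ∩ ker V ≠ 0`. -/
theorem stmt9 {p : ℕ} (hp : p.Prime) {𝔽 : Type*} [Field 𝔽] [IsAlgClosed 𝔽] [CharP 𝔽 p]
    {W : Type*} [AddCommGroup W] [Module 𝔽 W] [FiniteDimensional 𝔽 W] [Nontrivial W]
    (F V : W → W)
    (hFadd : ∀ x y, F (x + y) = F x + F y)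
    (hVadd : ∀ x y, V (x + y) = V x + V y)
    (hFsmul : ∀ (c : 𝔽) (x : W), F (c • x) = c ^ p • F x)
    (hVsmul : ∀ (c : 𝔽) (x : W), V (c ^ p • x) = c • V x)
    (hFnil : ∃ n : ℕ, ∀ x, F^[n] x = 0)
    (hVnil : ∃ n : ℕ, ∀ x, V^[n] x = 0)
    (hVF : ∀ x, F (V x) = 0)
    (hFV : ∀ x, V (F x) = 0) :
    ∃ x : W, x ≠ 0 ∧ F x = 0 ∧ V x = 0 := by
  have hF0 : F 0 = 0 := by
    have := hFadd 0 0
    simp only [add_zero] at this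
    exact (add_eq_left.mp this.symm)
  have hV0 : V 0 = 0 := by
    have := hVadd 0 0
    simp only [add_zero] at this
    exact (add_eq_left.mp this.symm)
  by_cases hV : ∀ x, V x = 0
  · by_cases hF : ∀ x, F x = 0
    · obtain ⟨x, hx⟩ := exists_ne (0 : W)
      exact ⟨x, hx, hF x, hV x⟩
    · push_neg at hF
      obtain ⟨x, hx⟩ := hF
      obtain ⟨z, hz, h1, h2⟩ := stmt9_aux V F hF0 hFnil hFV x hx
      exact ⟨z, hz, h2, h1⟩
  · push_neg at hV
    obtain ⟨x, hx⟩ := hV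
    exact stmt9_aux F V hV0 hVnil hVF x hx
end

section
/- Let g = 2 and let F : 𝔽^4 → 𝔽^4 be the σ-semilinear map with F(e_1) = e_4, F(e_2) = e_3, F(e_3) = F(e_4) = 0, and V : 𝔽^4 → 𝔽^4 the σ⁻¹-semilinear map with V(e_1) = −e_4, V(e_2) = −e_3, V(e_3) = V(e_4) = 0. Then a chain of subspaces 0 = W_0 ⊂ W_1 ⊂ W_2 of 𝔽^4 with dim W_j = j is a symplectic flag stable under F and V if and only if one of the following holds: (i) W_2 ⊆ span(e_3, e_4); (ii) there exist x ∈ 𝔽 with x^p = −x and (a,b) ∈ 𝔽² \ {(0,0)} such that W_1 = 𝔽·(x e_3 + e_4) and W_2 = W_1 + 𝔽·(a e_1 − x a e_2 + b e_3); (iii) there exists (a,b) ∈ 𝔽² \ {(0,0)} such that W_1 = 𝔽·e_3 and W_2 = 𝔽·e_3 + 𝔽·(a e_2 + b e_4). -/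
/-!
`F` and `V` vanish on `K = span (e₃, e₄)` and take values in it. Hence an `F`-stable line
`W₁ = 𝔽 u` lies in `K`: if `F u = c u` with `c ≠ 0` then `u ∈ im F ⊆ K`, and if `c = 0` then
`u ∈ ker F = K`. If `W₂ ⊄ K`, pick `v ∈ W₂ \ K`; then `W₂ ∩ K = W₁`, so `F v ∈ 𝔽 u`. Isotropy
`⟨u, v⟩ = 0` and `F v = v₂ᵖ e₃ + v₁ᵖ e₄ ∈ 𝔽 u` determine everything: either `u ∈ 𝔽 e₃`
(case (iii)), or `u = x e₃ + e₄`, `v₂ = -x v₁` and then `(-x)ᵖ v₁ᵖ = x v₁ᵖ`, i.e. `xᵖ = -x`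
(case (ii)). Conversely, for `W₁ = 𝔽 u ⊆ K` and `W₂ = W₁ + 𝔽 w`, the semilinear maps `F`, `V`
kill `u`, so stability of `W₂` only has to be checked on `w`, and isotropy of `W₂` reduces to
`⟨u, w⟩ = 0`.
-/

open Submodule

theorem apply_eq_sum_smul_apply_single {ι R M : Type*} [Fintype ι] [DecidableEq ι] [Semiring R]
    [AddCommGroup M] [Module R M] {σ : R → R} {f : (ι → R) → M}
    (hadd : ∀ x y, f (x + y) = f x + f y) (hsmul : ∀ (c : R) x, f (c • x) = σ c • f x)
    (v : ι → R) : f v = ∑ i, σ (v i) • f (Pi.single i 1) := by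
  calc f v = AddMonoidHom.mk' f hadd (∑ i, v i • Pi.single i 1) := by
        rw [← pi_eq_sum_univ' v]; rfl
    _ = ∑ i, σ (v i) • f (Pi.single i 1) := by simp [hsmul]

namespace Submodule

variable {K V : Type*} [DivisionRing K] [AddCommGroup V] [Module K V]

theorem sup_span_singleton_eq_of_sub_mem {W : Submodule K V} {v w : V} (h : v - w ∈ W) :
    W ⊔ K ∙ v = W ⊔ K ∙ w := by
  have h' : w - v ∈ W := by rw [← neg_sub]; exact W.neg_mem h
  refine le_antisymm (sup_le le_sup_left ?_) (sup_le le_sup_left ?_) <;>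
    rw [span_singleton_le_iff_mem]
  · simpa using add_mem (mem_sup_left h) (mem_sup_right (mem_span_singleton_self w))
  · simpa using add_mem (mem_sup_left h') (mem_sup_right (mem_span_singleton_self v))

theorem sup_span_singleton_inf_eq {W U : Submodule K V} {v : V} (hWU : W ≤ U) (hv : v ∉ U) :
    (W ⊔ K ∙ v) ⊓ U = W := by
  rw [sup_inf_assoc_of_le _ hWU, inf_comm, (disjoint_span_singleton_of_notMem hv).eq_bot,
    sup_bot_eq]

theorem eq_sup_span_singleton_of_finrank_eq_succ [FiniteDimensional K V] {W₁ W₂ : Submodule K V}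
    (hle : W₁ ≤ W₂) (hd : Module.finrank K W₂ = Module.finrank K W₁ + 1) {v : V} (hv₂ : v ∈ W₂)
    (hv₁ : v ∉ W₁) : W₂ = W₁ ⊔ K ∙ v :=
  (eq_of_le_of_finrank_eq (sup_le hle ((span_singleton_le_iff_mem _ _).2 hv₂))
    (by rw [finrank_sup_span_singleton hv₁, hd])).symm

theorem exists_eq_span_singleton_of_finrank_eq_one {W : Submodule K V}
    (hW : Module.finrank K W = 1) :
    ∃ u ≠ 0, W = K ∙ u := by
  obtain ⟨⟨u, hu⟩, hu0, hspan⟩ := finrank_eq_one_iff'.1 hW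
  refine ⟨u, fun h => hu0 (Subtype.ext h), le_antisymm (fun x hx => ?_)
    ((span_singleton_le_iff_mem _ _).2 hu)⟩
  obtain ⟨c, hc⟩ := hspan ⟨x, hx⟩
  exact mem_span_singleton.2 ⟨c, congrArg Subtype.val hc⟩

end Submodule

namespace SymplecticFlag

variable {K : Type*} [Field K] {p : ℕ}

-- Coordinates are `0`-based: `Pi.single i 1` is the paper's `e_{i+1}`.
def frob (p : ℕ) (v : Fin 4 → K) : Fin 4 → K :=
  v 1 ^ p • Pi.single 2 1 + v 0 ^ p • Pi.single 3 1

noncomputable def ver (p : ℕ) [ExpChar K p] [PerfectRing K p] (v : Fin 4 → K) : Fin 4 → K :=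
  -((frobeniusEquiv K p).symm (v 1) • Pi.single 2 1 +
    (frobeniusEquiv K p).symm (v 0) • Pi.single 3 1)

def form (x y : Fin 4 → K) : K :=
  x 0 * y 2 - x 2 * y 0 + (x 1 * y 3 - x 3 * y 1)

def kerFrob : Submodule K (Fin 4 → K) :=
  span K {Pi.single 2 1, Pi.single 3 1}

def IsStableFlag (p : ℕ) [ExpChar K p] [PerfectRing K p] (W₁ W₂ : Submodule K (Fin 4 → K)) :
    Prop :=
  (∀ x ∈ W₂, ∀ y ∈ W₂, form x y = 0) ∧
    (∀ x ∈ W₁, frob p x ∈ W₁ ∧ ver p x ∈ W₁) ∧ (∀ x ∈ W₂, frob p x ∈ W₂ ∧ ver p x ∈ W₂)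

theorem eq_frob {F : (Fin 4 → K) → Fin 4 → K} (hadd : ∀ x y, F (x + y) = F x + F y)
    (hsmul : ∀ (c : K) x, F (c • x) = c ^ p • F x)
    (h0 : F (Pi.single 0 1) = Pi.single 3 1) (h1 : F (Pi.single 1 1) = Pi.single 2 1)
    (h2 : F (Pi.single 2 1) = 0) (h3 : F (Pi.single 3 1) = 0) : F = frob p := by
  funext v
  rw [apply_eq_sum_smul_apply_single hadd hsmul v, Fin.sum_univ_four, h0, h1, h2, h3, frob]
  module

theorem eq_ver [ExpChar K p] [PerfectRing K p] {V : (Fin 4 → K) → Fin 4 → K}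
    (hadd : ∀ x y, V (x + y) = V x + V y) (hsmul : ∀ (c : K) x, V (c ^ p • x) = c • V x)
    (h0 : V (Pi.single 0 1) = -Pi.single 3 1) (h1 : V (Pi.single 1 1) = -Pi.single 2 1)
    (h2 : V (Pi.single 2 1) = 0) (h3 : V (Pi.single 3 1) = 0) : V = ver p := by
  have hsmul' (c : K) x : V (c • x) = (frobeniusEquiv K p).symm c • V x := by
    rw [← hsmul, frobeniusEquiv_symm_pow_p]
  funext v
  rw [apply_eq_sum_smul_apply_single hadd hsmul' v, Fin.sum_univ_four, h0, h1, h2, h3, ver]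
  module

theorem mem_kerFrob_iff {v : Fin 4 → K} : v ∈ kerFrob ↔ v 0 = 0 ∧ v 1 = 0 := by
  refine ⟨fun hv => ?_, fun ⟨h0, h1⟩ => mem_span_pair.2 ⟨v 2, v 3, ?_⟩⟩
  · obtain ⟨c, d, rfl⟩ := mem_span_pair.1 hv
    simp
  · ext i; fin_cases i <;> simp [h0, h1]

theorem frob_mem_kerFrob (v : Fin 4 → K) : frob p v ∈ kerFrob :=
  mem_span_pair.2 ⟨_, _, rfl⟩

theorem frob_eq_zero_iff (hp : p ≠ 0) {v : Fin 4 → K} : frob p v = 0 ↔ v ∈ kerFrob := by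
  rw [mem_kerFrob_iff]
  constructor
  · intro h
    exact ⟨by simpa [frob, hp] using congrFun h 3, by simpa [frob, hp] using congrFun h 2⟩
  · rintro ⟨h0, h1⟩
    simp [frob, h0, h1, hp]

theorem ver_eq_zero [ExpChar K p] [PerfectRing K p] {v : Fin 4 → K} (hv : v ∈ kerFrob) :
    ver p v = 0 := by
  obtain ⟨h0, h1⟩ := mem_kerFrob_iff.1 hv
  simp [ver, h0, h1]

theorem form_eq_zero {x y : Fin 4 → K} (hx : x ∈ kerFrob) (hy : y ∈ kerFrob) : form x y = 0 := by
  obtain ⟨hx0, hx1⟩ := mem_kerFrob_iff.1 hx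
  obtain ⟨hy0, hy1⟩ := mem_kerFrob_iff.1 hy
  simp [form, hx0, hx1, hy0, hy1]

theorem form_smul_add_smul (u w : Fin 4 → K) (c d c' d' : K) :
    form (c • u + d • w) (c' • u + d' • w) = (c * d' - d * c') * form u w := by
  simp only [form, Pi.add_apply, Pi.smul_apply, smul_eq_mul]
  ring

theorem frob_smul_add_smul {u : Fin 4 → K} (hu : u ∈ kerFrob) (c d : K) (w : Fin 4 → K) :
    frob p (c • u + d • w) = d ^ p • frob p w := by
  obtain ⟨h0, h1⟩ := mem_kerFrob_iff.1 hu
  simp only [frob, Pi.add_apply, Pi.smul_apply, smul_eq_mul, h0, h1, mul_zero, zero_add, mul_pow]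
  module

theorem ver_smul_add_smul [ExpChar K p] [PerfectRing K p] {u : Fin 4 → K} (hu : u ∈ kerFrob)
    (c d : K) (w : Fin 4 → K) :
    ver p (c • u + d • w) = (frobeniusEquiv K p).symm d • ver p w := by
  obtain ⟨h0, h1⟩ := mem_kerFrob_iff.1 hu
  simp only [ver, Pi.add_apply, Pi.smul_apply, smul_eq_mul, h0, h1, mul_zero, zero_add, map_mul]
  module

theorem mem_kerFrob_of_frob_mem_span_singleton (hp : p ≠ 0) {u : Fin 4 → K}
    (h : frob p u ∈ K ∙ u) : u ∈ kerFrob := by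
  obtain ⟨c, hc⟩ := mem_span_singleton.1 h
  rcases eq_or_ne c 0 with rfl | hc0
  · rw [← frob_eq_zero_iff hp, ← hc, zero_smul]
  · rw [← smul_mem_iff _ hc0, hc]
    exact frob_mem_kerFrob u

theorem span_singleton_eq_of_mem_kerFrob {u : Fin 4 → K} (hu : u ∈ kerFrob) (hu0 : u ≠ 0) :
    K ∙ u = K ∙ Pi.single 2 1 ∨ ∃ x : K, K ∙ u = K ∙ (x • Pi.single 2 1 + Pi.single 3 1) := by
  obtain ⟨h0, h1⟩ := mem_kerFrob_iff.1 hu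
  rcases eq_or_ne (u 3) 0 with h3 | h3
  · have hu2 : u = u 2 • Pi.single 2 1 := by ext i; fin_cases i <;> simp [h0, h1, h3]
    have h2 : u 2 ≠ 0 := fun h2 => hu0 (by rw [hu2, h2, zero_smul])
    left
    rw [hu2, span_singleton_smul_eq h2.isUnit]
  · obtain ⟨x, hx⟩ : ∃ x, u 2 = u 3 * x := ⟨u 2 / u 3, by field_simp⟩
    have hu3 : u = u 3 • (x • Pi.single 2 1 + Pi.single 3 1) := by
      ext i; fin_cases i <;> simp [h0, h1, hx]
    right
    exact ⟨x, by rw [hu3, span_singleton_smul_eq h3.isUnit]⟩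

theorem exists_sup_eq_of_form_single_two_eq_zero {v : Fin 4 → K} (hv : v ∉ kerFrob)
    (h : form (Pi.single 2 1) v = 0) :
    ∃ a b : K, (a, b) ≠ (0, 0) ∧
      (K ∙ Pi.single 2 1) ⊔ K ∙ v =
        (K ∙ Pi.single 2 1) ⊔ K ∙ (a • Pi.single 1 1 + b • Pi.single 3 1) := by
  have hv0 : v 0 = 0 := by simpa [form] using h
  refine ⟨v 1, v 3, fun hab => hv (mem_kerFrob_iff.2 ⟨hv0, congrArg Prod.fst hab⟩),
    sup_span_singleton_eq_of_sub_mem (mem_span_singleton.2 ⟨v 2, ?_⟩)⟩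
  ext i; fin_cases i <;> simp [hv0]

theorem pow_eq_neg_and_exists_sup_eq [ExpChar K p] (x : K) {v : Fin 4 → K} (hv : v ∉ kerFrob)
    (h : form (x • Pi.single 2 1 + Pi.single 3 1) v = 0)
    (hF : frob p v ∈ K ∙ (x • Pi.single 2 1 + Pi.single 3 1)) :
    x ^ p = -x ∧ ∃ a b : K, (a, b) ≠ (0, 0) ∧
      (K ∙ (x • Pi.single 2 1 + Pi.single 3 1)) ⊔ K ∙ v =
        (K ∙ (x • Pi.single 2 1 + Pi.single 3 1)) ⊔
          K ∙ (a • Pi.single 0 1 - (x * a) • Pi.single 1 1 + b • Pi.single 2 1) := by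
  have hv1 : v 1 = -(x * v 0) := by
    have h' : -(x * v 0) + -v 1 = 0 := by simpa [form] using h
    linear_combination -h'
  have hv0 : v 0 ≠ 0 := fun h0 => hv (mem_kerFrob_iff.2 ⟨h0, by rw [hv1, h0, mul_zero, neg_zero]⟩)
  obtain ⟨c, hc⟩ := mem_span_singleton.1 hF
  have hc2 : c * x = v 1 ^ p := by simpa [frob] using congrFun hc 2
  have hc3 : c = v 0 ^ p := by simpa [frob] using congrFun hc 3
  subst hc3
  refine ⟨mul_left_cancel₀ (pow_ne_zero p hv0) ?_, v 0, v 2 - x * v 3,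
    fun hab => hv0 (congrArg Prod.fst hab),
    sup_span_singleton_eq_of_sub_mem (mem_span_singleton.2 ⟨v 3, ?_⟩)⟩
  · have hneg : v 1 ^ p = -(x ^ p * v 0 ^ p) := by
      rw [hv1, neg_pow, neg_one_pow_expChar, mul_pow]
      ring
    linear_combination hc2 + hneg
  · ext i; fin_cases i <;> simp [hv1, mul_comm]

theorem classification_of_isotropic_of_frob_stable [ExpChar K p] {W₁ W₂ : Submodule K (Fin 4 → K)}
    (hW₁₂ : W₁ ≤ W₂) (hd₁ : Module.finrank K W₁ = 1) (hd₂ : Module.finrank K W₂ = 2)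
    (hform : ∀ x ∈ W₂, ∀ y ∈ W₂, form x y = 0) (hF₁ : ∀ x ∈ W₁, frob p x ∈ W₁)
    (hF₂ : ∀ x ∈ W₂, frob p x ∈ W₂) :
    W₂ ≤ kerFrob ∨
      (∃ x : K, x ^ p = -x ∧ ∃ a b : K, (a, b) ≠ (0, 0) ∧
        W₁ = K ∙ (x • Pi.single 2 1 + Pi.single 3 1) ∧
        W₂ = W₁ ⊔ K ∙ (a • Pi.single 0 1 - (x * a) • Pi.single 1 1 + b • Pi.single 2 1)) ∨
      (∃ a b : K, (a, b) ≠ (0, 0) ∧ W₁ = K ∙ Pi.single 2 1 ∧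
        W₂ = (K ∙ Pi.single 2 1) ⊔ K ∙ (a • Pi.single 1 1 + b • Pi.single 3 1)) := by
  obtain ⟨u, hu0, rfl⟩ := exists_eq_span_singleton_of_finrank_eq_one hd₁
  have hu : u ∈ kerFrob :=
    mem_kerFrob_of_frob_mem_span_singleton (expChar_pos K p).ne' (hF₁ u (mem_span_singleton_self u))
  have hu₁ : K ∙ u ≤ kerFrob := (span_singleton_le_iff_mem _ _).2 hu
  by_cases hK : W₂ ≤ kerFrob
  · exact Or.inl hK
  obtain ⟨v, hv₂, hv⟩ := SetLike.not_le_iff_exists.1 hK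
  obtain rfl : W₂ = (K ∙ u) ⊔ K ∙ v :=
    eq_sup_span_singleton_of_finrank_eq_succ hW₁₂ (by rw [hd₁, hd₂]) hv₂ (fun h => hv (hu₁ h))
  have hFv : frob p v ∈ K ∙ u := by
    rw [← sup_span_singleton_inf_eq hu₁ hv]
    exact ⟨hF₂ v hv₂, frob_mem_kerFrob v⟩
  have hformv (y) (hy : y ∈ K ∙ u) : form y v = 0 :=
    hform y (mem_sup_left hy) v (mem_sup_right (mem_span_singleton_self v))
  right
  rcases span_singleton_eq_of_mem_kerFrob hu hu0 with h | ⟨x, h⟩ <;> rw [h] at hFv hformv ⊢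
  · obtain ⟨a, b, hab, hsup⟩ :=
      exists_sup_eq_of_form_single_two_eq_zero hv (hformv _ (mem_span_singleton_self _))
    exact Or.inr ⟨a, b, hab, rfl, hsup⟩
  · obtain ⟨hx, a, b, hab, hsup⟩ :=
      pow_eq_neg_and_exists_sup_eq x hv (hformv _ (mem_span_singleton_self _)) hFv
    exact Or.inl ⟨x, hx, a, b, hab, rfl, hsup⟩

variable [ExpChar K p] [PerfectRing K p]

theorem isStableFlag_of_le_kerFrob {W₁ W₂ : Submodule K (Fin 4 → K)} (hW₁₂ : W₁ ≤ W₂)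
    (hW₂ : W₂ ≤ kerFrob) : IsStableFlag p W₁ W₂ := by
  have hstable (W : Submodule K (Fin 4 → K)) (hW : W ≤ kerFrob) x (hx : x ∈ W) :
      frob p x ∈ W ∧ ver p x ∈ W := by
    rw [(frob_eq_zero_iff (expChar_pos K p).ne').2 (hW hx), ver_eq_zero (hW hx)]
    exact ⟨zero_mem W, zero_mem W⟩
  exact ⟨fun x hx y hy => form_eq_zero (hW₂ hx) (hW₂ hy), hstable W₁ (hW₁₂.trans hW₂),
    hstable W₂ hW₂⟩

theorem isStableFlag_span_singleton_sup {u w : Fin 4 → K} (hu : u ∈ kerFrob) (hform : form u w = 0)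
    (hF : frob p w ∈ K ∙ u) (hV : ver p w ∈ K ∙ u) :
    IsStableFlag p (K ∙ u) ((K ∙ u) ⊔ K ∙ w) := by
  have hmem (z) (hz : z ∈ (K ∙ u) ⊔ K ∙ w) : ∃ c d : K, c • u + d • w = z := by
    rwa [← span_insert, mem_span_pair] at hz
  refine ⟨fun z hz z' hz' => ?_, ?_, fun z hz => ?_⟩
  · obtain ⟨c, d, rfl⟩ := hmem z hz
    obtain ⟨c', d', rfl⟩ := hmem z' hz'
    rw [form_smul_add_smul, hform, mul_zero]
  · exact (isStableFlag_of_le_kerFrob le_rfl ((span_singleton_le_iff_mem _ _).2 hu)).2.1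
  · obtain ⟨c, d, rfl⟩ := hmem z hz
    rw [frob_smul_add_smul hu, ver_smul_add_smul hu]
    exact ⟨mem_sup_left (smul_mem _ _ hF), mem_sup_left (smul_mem _ _ hV)⟩

theorem isStableFlag_of_pow_eq_neg {x : K} (hx : x ^ p = -x) (a b : K) :
    IsStableFlag p (K ∙ (x • Pi.single 2 1 + Pi.single 3 1))
      ((K ∙ (x • Pi.single 2 1 + Pi.single 3 1)) ⊔
        K ∙ (a • Pi.single 0 1 - (x * a) • Pi.single 1 1 + b • Pi.single 2 1)) := by
  have hpow : (-(x * a)) ^ p = x * a ^ p := by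
    rw [neg_pow, neg_one_pow_expChar, mul_pow, hx]
    ring
  have hρ : (frobeniusEquiv K p).symm x = -x := by
    rw [RingEquiv.symm_apply_eq, frobeniusEquiv_apply, frobenius_def, neg_pow,
      neg_one_pow_expChar, hx]
    ring
  refine isStableFlag_span_singleton_sup (mem_kerFrob_iff.2 (by simp)) (by simp [form]) ?_ ?_
  · refine mem_span_singleton.2 ⟨a ^ p, ?_⟩
    ext i; fin_cases i <;> simp [frob, hpow, mul_comm]
  · refine mem_span_singleton.2 ⟨-(frobeniusEquiv K p).symm a, ?_⟩
    ext i; fin_cases i <;> simp [ver, hρ, mul_comm]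

theorem isStableFlag_single_two (a b : K) :
    IsStableFlag p (K ∙ Pi.single 2 1)
      ((K ∙ Pi.single 2 1) ⊔ K ∙ (a • Pi.single 1 1 + b • Pi.single 3 1)) := by
  refine isStableFlag_span_singleton_sup (mem_kerFrob_iff.2 (by simp)) (by simp [form]) ?_ ?_
  · exact mem_span_singleton.2 ⟨a ^ p, by simp [frob, (expChar_pos K p).ne']⟩
  · exact mem_span_singleton.2 ⟨-(frobeniusEquiv K p).symm a, by simp [ver]⟩

end SymplecticFlag

/-- case `g = 2`, `w = id`. `𝔽^4` carries the standard basis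
`e 0, …, e 3` (`e_i = e (i-1)` in the paper's `1`-based numbering) and the alternating form
`⟨x, y⟩ = x₁y₃ - x₃y₁ + x₂y₄ - x₄y₂`. Let `F` be the `σ`-semilinear map with `F e₁ = e₄`,
`F e₂ = e₃`, `F e₃ = F e₄ = 0`, and `V` the `σ⁻¹`-semilinear map with `V e₁ = -e₄`,
`V e₂ = -e₃`, `V e₃ = V e₄ = 0`. Then a chain `0 = W₀ ⊂ W₁ ⊂ W₂` with `dim W_j = j` is a
symplectic flag stable under `F` and `V` iff (i) `W₂ ⊆ span (e₃, e₄)`, or (ii) there are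
`x ∈ 𝔽` with `x ^ p = -x` and `(a, b) ≠ (0, 0)` with `W₁ = 𝔽·(x e₃ + e₄)` and
`W₂ = W₁ + 𝔽·(a e₁ - x a e₂ + b e₃)`, or (iii) there is `(a, b) ≠ (0, 0)` with
`W₁ = 𝔽·e₃` and `W₂ = 𝔽·e₃ + 𝔽·(a e₂ + b e₄)`. -/
theorem stmt13 {p : ℕ} (hp : p.Prime) {𝔽 : Type*} [Field 𝔽] [IsAlgClosed 𝔽] [CharP 𝔽 p]
    (e : Fin 4 → Fin 4 → 𝔽) (he : ∀ i, e i = Pi.single i 1)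
    (B : (Fin 4 → 𝔽) → (Fin 4 → 𝔽) → 𝔽)
    (hB : ∀ x y, B x y = x 0 * y 2 - x 2 * y 0 + (x 1 * y 3 - x 3 * y 1))
    (F V : (Fin 4 → 𝔽) → (Fin 4 → 𝔽))
    (hFadd : ∀ x y, F (x + y) = F x + F y)
    (hVadd : ∀ x y, V (x + y) = V x + V y)
    (hFsmul : ∀ (c : 𝔽) x, F (c • x) = c ^ p • F x)
    (hVsmul : ∀ (c : 𝔽) x, V (c ^ p • x) = c • V x)
    (hF0 : F (e 0) = e 3) (hF1 : F (e 1) = e 2) (hF2 : F (e 2) = 0) (hF3 : F (e 3) = 0)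
    (hV0 : V (e 0) = -e 3) (hV1 : V (e 1) = -e 2) (hV2 : V (e 2) = 0) (hV3 : V (e 3) = 0)
    (W1 W2 : Submodule 𝔽 (Fin 4 → 𝔽)) (hW12 : W1 ≤ W2)
    (hd1 : Module.finrank 𝔽 W1 = 1) (hd2 : Module.finrank 𝔽 W2 = 2) :
    ((∀ x ∈ W2, ∀ y ∈ W2, B x y = 0) ∧
      (∀ x ∈ W1, F x ∈ W1 ∧ V x ∈ W1) ∧ (∀ x ∈ W2, F x ∈ W2 ∧ V x ∈ W2)) ↔
    ((W2 ≤ Submodule.span 𝔽 {e 2, e 3}) ∨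
      (∃ x : 𝔽, x ^ p = -x ∧ ∃ a b : 𝔽, (a, b) ≠ (0, 0) ∧
        W1 = Submodule.span 𝔽 {x • e 2 + e 3} ∧
        W2 = W1 ⊔ Submodule.span 𝔽 {a • e 0 - (x * a) • e 1 + b • e 2}) ∨
      (∃ a b : 𝔽, (a, b) ≠ (0, 0) ∧
        W1 = Submodule.span 𝔽 {e 2} ∧
        W2 = Submodule.span 𝔽 {e 2} ⊔ Submodule.span 𝔽 {a • e 1 + b • e 3})) := by
  have : Fact p.Prime := ⟨hp⟩
  obtain rfl : e = fun i => Pi.single i 1 := funext he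
  obtain rfl : F = SymplecticFlag.frob p := SymplecticFlag.eq_frob hFadd hFsmul hF0 hF1 hF2 hF3
  obtain rfl : V = SymplecticFlag.ver p := SymplecticFlag.eq_ver hVadd hVsmul hV0 hV1 hV2 hV3
  obtain rfl : B = SymplecticFlag.form := funext₂ hB
  constructor
  · rintro ⟨hform, hst₁, hst₂⟩
    exact SymplecticFlag.classification_of_isotropic_of_frob_stable hW12 hd1 hd2 hform
      (fun x hx => (hst₁ x hx).1) (fun x hx => (hst₂ x hx).1)
  · rintro (hK | ⟨x, hx, a, b, -, rfl, rfl⟩ | ⟨a, b, -, rfl, rfl⟩)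
    · exact SymplecticFlag.isStableFlag_of_le_kerFrob hW12 hK
    · exact SymplecticFlag.isStableFlag_of_pow_eq_neg hx a b
    · exact SymplecticFlag.isStableFlag_single_two a b
end

section
/- Let g = 3 and let F : 𝔽^6 → 𝔽^6 be the σ-semilinear map with F(e_1) = e_6, F(e_2) = e_5, F(e_3) = e_1, F(e_4) = F(e_5) = F(e_6) = 0, and V : 𝔽^6 → 𝔽^6 the σ⁻¹-semilinear map with V(e_1) = 0, V(e_2) = −e_5, V(e_3) = −e_4, V(e_4) = e_6, V(e_5) = V(e_6) = 0. Then a chain of subspaces 0 = W_0 ⊂ W_1 ⊂ W_2 ⊂ W_3 of 𝔽^6 with dim W_j = j is a symplectic flag stable under F and V if and only if one of the following holds: (X) W_2 = span(e_5, e_6) and W_3 ⊆ span(e_1, e_4, e_5, e_6); (Y) W_1 = 𝔽·e_6 and span(e_5, e_6) ⊆ W_3 ⊆ span(e_1, e_4, e_5, e_6). -/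
/-!
Indices are `0`-based, so `Pi.single i 1` is the paper's `e_{i+1}`. Put
`U = span (e₀, e₃, e₄, e₅)` and `S = span (e₄, e₅)`. For `z` in an isotropic stable `W₃`,
`⟨F z, V z⟩ = -z₂ ^ p · z₂ ^ (1/p)` forces `z₂ = 0`, and then `⟨z, F z⟩ = z₁ ^ (p + 1)` forces
`z₁ = 0`, so `W₃ ⊆ U`. On `U` both `F` and `V` take values in `𝔽 e₅`, hence a subspace
`W ⊆ U` is stable iff `W ⊆ S` or `e₅ ∈ W`. On `U` the form is `x₀ y₃ - x₃ y₀`, with radical `S`,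
so a `3`-dimensional `W ⊆ U` is isotropic iff `S ⊆ W`. The flag is then of type (Y) when
`e₅ ∈ W₁`, and of type (X) otherwise, because then `W₁ ⊕ 𝔽 e₅ = S` forces `W₂ = S`.
-/

open Module Submodule

section PiSingle

variable {K : Type*} [Field K] {ι : Type*} [Fintype ι] [DecidableEq ι]

theorem apply_eq_sum_smul_apply_pi_single {M : Type*} [AddCommGroup M] [Module K M]
    {f : (ι → K) → M} {φ : K → K} (hadd : ∀ x y, f (x + y) = f x + f y)
    (hsmul : ∀ (c : K) x, f (c • x) = φ c • f x) (x : ι → K) :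
    f x = ∑ i, φ (x i) • f (Pi.single i 1) := by
  conv_lhs => rw [← Finset.univ_sum_single x]
  simpa only [AddMonoidHom.mk'_apply, ← hsmul, ← Pi.single_smul', smul_eq_mul, mul_one]
    using map_sum (AddMonoidHom.mk' f hadd) (fun i => Pi.single i (x i)) Finset.univ

theorem mem_span_image_pi_single_iff {s : Set ι} {x : ι → K} :
    x ∈ span K ((fun i => Pi.single i 1) '' s) ↔ ∀ i ∉ s, x i = 0 := by
  have : (fun i => Pi.single i (1 : K)) = Pi.basisFun K ι :=
    funext fun i => (Pi.basisFun_apply K ι i).symm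
  rw [this, Basis.mem_span_image, Set.subset_def]
  simp only [Finset.mem_coe, Finsupp.mem_support_iff, Pi.basisFun_repr]
  exact forall_congr' fun i => not_imp_comm

theorem finrank_span_image_pi_single (s : Finset ι) :
    finrank K (span K ((fun i => Pi.single i (1 : K)) '' (s : Set ι))) = s.card := by
  rw [Set.image_eq_range, finrank_span_eq_card]
  · simp
  · simpa only [Function.comp_def, Pi.basisFun_apply] using
      (Pi.basisFun K ι).linearIndependent.comp _ Subtype.val_injective

end PiSingle

theorem Submodule.eq_of_lt_of_le_of_finrank_le {K V : Type*} [DivisionRing K] [AddCommGroup V]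
    [Module K V] [FiniteDimensional K V] {A B C : Submodule K V} (hAB : A < B) (hBC : B ≤ C)
    (hC : finrank K C ≤ finrank K A + 1) : B = C :=
  eq_of_le_of_finrank_le hBC (hC.trans (finrank_lt_finrank_of_lt hAB))

namespace StableFlag

variable {K : Type*} [Field K]

def stdForm (x y : Fin 6 → K) : K :=
  x 0 * y 3 - x 3 * y 0 + (x 1 * y 4 - x 4 * y 1) + (x 2 * y 5 - x 5 * y 2)

def mapF (φ : K →+* K) (x : Fin 6 → K) : Fin 6 → K := ![φ (x 2), 0, 0, 0, φ (x 1), φ (x 0)]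

def mapV (ψ : K →+* K) (x : Fin 6 → K) : Fin 6 → K := ![0, 0, 0, -ψ (x 2), -ψ (x 1), ψ (x 3)]

def IsIsotropic (W : Submodule K (Fin 6 → K)) : Prop := ∀ x ∈ W, ∀ y ∈ W, stdForm x y = 0

def IsStable (φ ψ : K →+* K) (W : Submodule K (Fin 6 → K)) : Prop :=
  ∀ x ∈ W, mapF φ x ∈ W ∧ mapV ψ x ∈ W

variable (K) in
def S : Submodule K (Fin 6 → K) := span K {Pi.single 4 1, Pi.single 5 1}

variable (K) in
def U : Submodule K (Fin 6 → K) :=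
  span K {Pi.single 0 1, Pi.single 3 1, Pi.single 4 1, Pi.single 5 1}

theorem S_eq_span_image :
    S K = span K ((fun i => Pi.single i 1) '' ({4, 5} : Finset (Fin 6))) := by
  simp [S, Set.image_insert_eq]

theorem U_eq_span_image :
    U K = span K ((fun i => Pi.single i 1) '' ({0, 3, 4, 5} : Finset (Fin 6))) := by
  simp [U, Set.image_insert_eq]

theorem mem_S_iff {x : Fin 6 → K} : x ∈ S K ↔ x 0 = 0 ∧ x 1 = 0 ∧ x 2 = 0 ∧ x 3 = 0 := by
  simp [S_eq_span_image, mem_span_image_pi_single_iff, Fin.forall_fin_succ]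

theorem mem_U_iff {x : Fin 6 → K} : x ∈ U K ↔ x 1 = 0 ∧ x 2 = 0 := by
  simp [U_eq_span_image, mem_span_image_pi_single_iff, Fin.forall_fin_succ]

theorem finrank_S : finrank K (S K) = 2 := by
  rw [S_eq_span_image, finrank_span_image_pi_single]; rfl

theorem finrank_U : finrank K (U K) = 4 := by
  rw [U_eq_span_image, finrank_span_image_pi_single]; rfl

theorem single_five_mem_S : (Pi.single 5 1 : Fin 6 → K) ∈ S K :=
  subset_span (by simp)

theorem S_le_U : S K ≤ U K := fun _ hx =>
  mem_U_iff.2 ⟨(mem_S_iff.1 hx).2.1, (mem_S_iff.1 hx).2.2.1⟩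

theorem stdForm_of_mem_U {x y : Fin 6 → K} (hx : x ∈ U K) (hy : y ∈ U K) :
    stdForm x y = x 0 * y 3 - x 3 * y 0 := by
  obtain ⟨hx1, hx2⟩ := mem_U_iff.1 hx
  obtain ⟨hy1, hy2⟩ := mem_U_iff.1 hy
  simp only [stdForm, hx1, hx2, hy1, hy2]
  ring

theorem mapF_of_mem_U (φ : K →+* K) {x : Fin 6 → K} (hx : x ∈ U K) :
    mapF φ x = φ (x 0) • Pi.single 5 1 := by
  obtain ⟨hx1, hx2⟩ := mem_U_iff.1 hx
  ext i; fin_cases i <;> simp [mapF, hx1, hx2]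

theorem mapV_of_mem_U (ψ : K →+* K) {x : Fin 6 → K} (hx : x ∈ U K) :
    mapV ψ x = ψ (x 3) • Pi.single 5 1 := by
  obtain ⟨hx1, hx2⟩ := mem_U_iff.1 hx
  ext i; fin_cases i <;> simp [mapV, hx1, hx2]

variable {φ ψ : K →+* K} {W : Submodule K (Fin 6 → K)}

theorem le_U_of_isIsotropic_of_isStable (hiso : IsIsotropic W) (hst : IsStable φ ψ W) :
    W ≤ U K := by
  intro z hz
  obtain ⟨hFz, hVz⟩ := hst z hz
  have h2 : φ (z 2) * ψ (z 2) = 0 := by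
    simpa [stdForm, mapF, mapV] using hiso _ hFz _ hVz
  rw [mul_eq_zero, map_eq_zero, map_eq_zero, or_self] at h2
  have h1 : z 1 * φ (z 1) = 0 := by
    simpa [stdForm, mapF, h2] using hiso _ hz _ hFz
  rw [mul_eq_zero, map_eq_zero, or_self] at h1
  exact mem_U_iff.2 ⟨h1, h2⟩

theorem isStable_iff (hWU : W ≤ U K) :
    IsStable φ ψ W ↔ W ≤ S K ∨ Pi.single 5 1 ∈ W := by
  constructor
  · intro hst
    refine or_iff_not_imp_left.2 fun hWS => ?_
    obtain ⟨w, hw, hwS⟩ := Set.not_subset.1 hWS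
    have hwU := hWU hw
    obtain ⟨hFw, hVw⟩ := hst w hw
    rw [mapF_of_mem_U φ hwU] at hFw
    rw [mapV_of_mem_U ψ hwU] at hVw
    by_cases h0 : w 0 = 0
    · have h3 : w 3 ≠ 0 := fun h3 =>
        hwS (mem_S_iff.2 ⟨h0, (mem_U_iff.1 hwU).1, (mem_U_iff.1 hwU).2, h3⟩)
      exact (W.smul_mem_iff ((map_ne_zero ψ).2 h3)).1 hVw
    · exact (W.smul_mem_iff ((map_ne_zero φ).2 h0)).1 hFw
  · rintro (hWS | h5) x hx
    · obtain ⟨h0, -, -, h3⟩ := mem_S_iff.1 (hWS hx)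
      simp [mapF_of_mem_U φ (hWU hx), mapV_of_mem_U ψ (hWU hx), h0, h3]
    · rw [mapF_of_mem_U φ (hWU hx), mapV_of_mem_U ψ (hWU hx)]
      exact ⟨W.smul_mem _ h5, W.smul_mem _ h5⟩

-- `S` is the radical of `stdForm` restricted to `U`.
theorem isIsotropic_sup_S (hWU : W ≤ U K) (hW : IsIsotropic W) : IsIsotropic (W ⊔ S K) := by
  intro x hx y hy
  obtain ⟨w, hw, s, hs, rfl⟩ := mem_sup.1 hx
  obtain ⟨w', hw', s', hs', rfl⟩ := mem_sup.1 hy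
  obtain ⟨hs0, -, -, hs3⟩ := mem_S_iff.1 hs
  obtain ⟨hs'0, -, -, hs'3⟩ := mem_S_iff.1 hs'
  have hwU := hWU hw
  have hw'U := hWU hw'
  rw [stdForm_of_mem_U (add_mem hwU (S_le_U hs)) (add_mem hw'U (S_le_U hs'))]
  simpa [stdForm_of_mem_U hwU hw'U, hs0, hs3, hs'0, hs'3] using hW w hw w' hw'

theorem isIsotropic_span_singleton (v : Fin 6 → K) : IsIsotropic (K ∙ v) := by
  intro x hx y hy
  obtain ⟨a, rfl⟩ := mem_span_singleton.1 hx
  obtain ⟨b, rfl⟩ := mem_span_singleton.1 hy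
  simp only [stdForm, Pi.smul_apply, smul_eq_mul]
  ring

theorem isIsotropic_iff_S_le (hWU : W ≤ U K) (hW : finrank K W = 3) :
    IsIsotropic W ↔ S K ≤ W := by
  constructor
  · intro hiso
    by_contra hSW
    have hU : W ⊔ S K = U K :=
      eq_of_lt_of_le_of_finrank_le (left_lt_sup.2 hSW) (sup_le hWU S_le_U)
        (by rw [finrank_U, hW])
    have h03 := isIsotropic_sup_S hWU hiso (Pi.single 0 1) (hU ▸ subset_span (by simp))
      (Pi.single 3 1) (hU ▸ subset_span (by simp))
    simp [stdForm] at h03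
  · intro hSW
    obtain ⟨w, hw, hwS⟩ := SetLike.exists_of_lt (lt_of_le_of_ne hSW fun h => by
      rw [← h, finrank_S] at hW
      norm_num at hW)
    have hW' : S K ⊔ (K ∙ w) = W :=
      eq_of_lt_of_le_of_finrank_le (left_lt_sup.2 ((span_singleton_le_iff_mem w _).not.2 hwS))
        (sup_le hSW ((span_singleton_le_iff_mem w W).2 hw)) (by rw [hW, finrank_S])
    rw [← hW', sup_comm]
    exact isIsotropic_sup_S ((span_singleton_le_iff_mem w _).2 (hWU hw))
      (isIsotropic_span_singleton w)

theorem isIsotropic_and_isStable_iff {W1 W2 W3 : Submodule K (Fin 6 → K)} (hW12 : W1 ≤ W2)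
    (hW23 : W2 ≤ W3) (hd1 : finrank K W1 = 1) (hd2 : finrank K W2 = 2) (hd3 : finrank K W3 = 3) :
    (IsIsotropic W3 ∧ IsStable φ ψ W1 ∧ IsStable φ ψ W2 ∧ IsStable φ ψ W3) ↔
      (W2 = S K ∧ W3 ≤ U K) ∨ (W1 = K ∙ Pi.single 5 1 ∧ S K ≤ W3 ∧ W3 ≤ U K) := by
  constructor
  · rintro ⟨hiso, hst1, hst2, hst3⟩
    have hW3U := le_U_of_isIsotropic_of_isStable hiso hst3
    have hW2U := hW23.trans hW3U
    by_cases h5 : Pi.single 5 1 ∈ W1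
    · refine Or.inr ⟨?_, (isIsotropic_iff_S_le hW3U hd3).1 hiso, hW3U⟩
      refine (eq_of_le_of_finrank_le ((span_singleton_le_iff_mem _ _).2 h5) ?_).symm
      rw [hd1, finrank_span_singleton (by simp)]
    · refine Or.inl ⟨?_, hW3U⟩
      have hW1S := ((isStable_iff (hW12.trans hW2U)).1 hst1).resolve_right h5
      have hS : W1 ⊔ (K ∙ Pi.single 5 1) = S K :=
        eq_of_lt_of_le_of_finrank_le (left_lt_sup.2 ((span_singleton_le_iff_mem _ _).not.2 h5))
          (sup_le hW1S ((span_singleton_le_iff_mem _ _).2 single_five_mem_S))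
          (by rw [finrank_S, hd1])
      rcases (isStable_iff hW2U).1 hst2 with hW2S | h5W2
      · exact eq_of_le_of_finrank_le hW2S (by rw [finrank_S, hd2])
      · refine (eq_of_le_of_finrank_le (hS ▸ sup_le hW12 ?_) (by rw [finrank_S, hd2])).symm
        exact (span_singleton_le_iff_mem _ _).2 h5W2
  · have stable_of_le_U : ∀ {W}, W ≤ W3 → W3 ≤ U K → (W ≤ S K ∨ Pi.single 5 1 ∈ W) →
        IsStable φ ψ W := fun hW hW3U => (isStable_iff (hW.trans hW3U)).2
    rintro (⟨rfl, hW3U⟩ | ⟨rfl, hSW3, hW3U⟩)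
    · exact ⟨(isIsotropic_iff_S_le hW3U hd3).2 hW23, stable_of_le_U (hW12.trans hW23) hW3U
        (Or.inl hW12), stable_of_le_U hW23 hW3U (Or.inl le_rfl),
        stable_of_le_U le_rfl hW3U (Or.inr (hW23 single_five_mem_S))⟩
    · have h5 : Pi.single 5 1 ∈ K ∙ (Pi.single 5 1 : Fin 6 → K) := mem_span_singleton_self _
      exact ⟨(isIsotropic_iff_S_le hW3U hd3).2 hSW3,
        stable_of_le_U (hW12.trans hW23) hW3U (Or.inr h5),
        stable_of_le_U hW23 hW3U (Or.inr (hW12 h5)),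
        stable_of_le_U le_rfl hW3U (Or.inr (hW23 (hW12 h5)))⟩

end StableFlag

/-- case `g = 3`, `w = s₃₂₃`. `𝔽^6` carries the standard basis
`e 0, …, e 5` (`e_i = e (i-1)` in the paper's `1`-based numbering) and the standard
alternating form. `F` is the `σ`-semilinear map with `F e₁ = e₆`, `F e₂ = e₅`,
`F e₃ = e₁`, `F e₄ = F e₅ = F e₆ = 0`, and `V` the `σ⁻¹`-semilinear map with
`V e₁ = 0`, `V e₂ = -e₅`, `V e₃ = -e₄`, `V e₄ = e₆`, `V e₅ = V e₆ = 0`. A chain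
`0 = W₀ ⊂ W₁ ⊂ W₂ ⊂ W₃` with `dim W_j = j` is a symplectic flag stable under `F` and
`V` iff (X) `W₂ = span (e₅, e₆)` and `W₃ ⊆ span (e₁, e₄, e₅, e₆)`, or
(Y) `W₁ = 𝔽·e₆` and `span (e₅, e₆) ⊆ W₃ ⊆ span (e₁, e₄, e₅, e₆)`. -/
theorem stmt14 {p : ℕ} (hp : p.Prime) {𝔽 : Type*} [Field 𝔽] [IsAlgClosed 𝔽] [CharP 𝔽 p]
    (e : Fin 6 → Fin 6 → 𝔽) (he : ∀ i, e i = Pi.single i 1)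
    (B : (Fin 6 → 𝔽) → (Fin 6 → 𝔽) → 𝔽)
    (hB : ∀ x y, B x y = x 0 * y 3 - x 3 * y 0 + (x 1 * y 4 - x 4 * y 1)
      + (x 2 * y 5 - x 5 * y 2))
    (F V : (Fin 6 → 𝔽) → (Fin 6 → 𝔽))
    (hFadd : ∀ x y, F (x + y) = F x + F y)
    (hVadd : ∀ x y, V (x + y) = V x + V y)
    (hFsmul : ∀ (c : 𝔽) x, F (c • x) = c ^ p • F x)
    (hVsmul : ∀ (c : 𝔽) x, V (c ^ p • x) = c • V x)
    (hF0 : F (e 0) = e 5) (hF1 : F (e 1) = e 4) (hF2 : F (e 2) = e 0)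
    (hF3 : F (e 3) = 0) (hF4 : F (e 4) = 0) (hF5 : F (e 5) = 0)
    (hV0 : V (e 0) = 0) (hV1 : V (e 1) = -e 4) (hV2 : V (e 2) = -e 3)
    (hV3 : V (e 3) = e 5) (hV4 : V (e 4) = 0) (hV5 : V (e 5) = 0)
    (W1 W2 W3 : Submodule 𝔽 (Fin 6 → 𝔽)) (hW12 : W1 ≤ W2) (hW23 : W2 ≤ W3)
    (hd1 : Module.finrank 𝔽 W1 = 1) (hd2 : Module.finrank 𝔽 W2 = 2)
    (hd3 : Module.finrank 𝔽 W3 = 3) :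
    ((∀ x ∈ W3, ∀ y ∈ W3, B x y = 0) ∧
      (∀ x ∈ W1, F x ∈ W1 ∧ V x ∈ W1) ∧ (∀ x ∈ W2, F x ∈ W2 ∧ V x ∈ W2) ∧
      (∀ x ∈ W3, F x ∈ W3 ∧ V x ∈ W3)) ↔
    ((W2 = Submodule.span 𝔽 {e 4, e 5} ∧
        W3 ≤ Submodule.span 𝔽 {e 0, e 3, e 4, e 5}) ∨
      (W1 = Submodule.span 𝔽 {e 5} ∧ Submodule.span 𝔽 {e 4, e 5} ≤ W3 ∧
        W3 ≤ Submodule.span 𝔽 {e 0, e 3, e 4, e 5})) := by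
  have : Fact p.Prime := ⟨hp⟩
  obtain rfl : e = fun i => Pi.single i 1 := funext he
  obtain rfl : B = StableFlag.stdForm := funext fun x => funext (hB x)
  obtain rfl : F = StableFlag.mapF (frobenius 𝔽 p) := by
    ext x : 1
    rw [apply_eq_sum_smul_apply_pi_single hFadd hFsmul x]
    simp only [Fin.sum_univ_six, hF0, hF1, hF2, hF3, hF4, hF5]
    ext i; fin_cases i <;> simp [StableFlag.mapF, frobenius_def]
  obtain rfl : V = StableFlag.mapV (frobeniusEquiv 𝔽 p).symm := by
    have hVsmul' (c : 𝔽) (x) : V (c • x) = (frobeniusEquiv 𝔽 p).symm c • V x := by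
      rw [← hVsmul, frobeniusEquiv_symm_pow_p]
    ext x : 1
    rw [apply_eq_sum_smul_apply_pi_single hVadd hVsmul' x]
    simp only [Fin.sum_univ_six, hV0, hV1, hV2, hV3, hV4, hV5]
    ext i; fin_cases i <;> simp [StableFlag.mapV]
  exact StableFlag.isIsotropic_and_isStable_iff hW12 hW23 hd1 hd2 hd3
end

section
/- Let g = 3 and let F : 𝔽^6 → 𝔽^6 be the σ-semilinear map with F(e_1) = e_6, F(e_2) = e_1, F(e_3) = e_5, F(e_4) = F(e_5) = F(e_6) = 0, and V : 𝔽^6 → 𝔽^6 the σ⁻¹-semilinear map with V(e_1) = 0, V(e_2) = −e_6, V(e_3) = −e_4, V(e_4) = e_5, V(e_5) = V(e_6) = 0. Then a chain of subspaces 0 = W_0 ⊂ W_1 ⊂ W_2 ⊂ W_3 of 𝔽^6 with dim W_j = j is a symplectic flag stable under F and V if and only if one of the following holds: (X) W_2 = span(e_5, e_6) and W_3 ⊆ span(e_1, e_4, e_5, e_6); (Y₁) W_1 = 𝔽·e_5 and W_3 = span(e_4, e_5, e_6); (Y₂) W_1 = 𝔽·e_6 and W_3 = span(e_1, e_5, e_6);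 (Z₁) W_1 = 𝔽·e_6, W_2 = span(e_1, e_6) and W_3 ⊆ span(e_1, e_2, e_5, e_6); (Z₂) W_1 = 𝔽·e_5, W_2 = span(e_4, e_5) and W_3 ⊆ span(e_3, e_4, e_5, e_6). -/
/-!
Write `eᵢ = Pi.single i 1` (so `eᵢ` is `e_{i+1}` of the paper). In coordinates
`F x = x₁ᵖ e₀ + x₂ᵖ e₄ + x₀ᵖ e₅` and `V x = -x₂^{1/p} e₃ + x₃^{1/p} e₄ - x₁^{1/p} e₅`, and all that
matters about `c ↦ cᵖ` and `c ↦ c^{1/p}` is that they vanish exactly at `0`.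

A stable subspace of dimension at most `2` lies in `⟨e₀, e₃, e₄, e₅⟩`: a vector with `x₁ ≠ 0`
(resp. `x₂ ≠ 0`) would make `x, F x, F² x` (resp. `x, V x, V² x`) independent. There `F` and `V`
act by `x ↦ x₀ᵖ e₅` and `x ↦ x₃^{1/p} e₄`, so either `W₂ = ⟨e₄, e₅⟩` (case X), or `W₂` contains
`e₅` and a vector with `x₀ ≠ 0` (cases Y₂, Z₁), or `e₄` and a vector with `x₃ ≠ 0` (cases Y₁, Z₂).
In each case the remaining coordinates of `W₁` and `W₃` are forced by dimension counting and by
isotropy against the basis vectors already found in `W₃`. Conversely, stability is read off from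
the supports, and isotropy comes down to one `2 × 2` minor, which vanishes because otherwise `W₃`
would contain four basis vectors.
-/

open Module Submodule

section Triangular

variable {K ι : Type*} [Field K] [Fintype ι]

theorem three_le_finrank_of_triangular {W : Submodule K (ι → K)} {a b c : ι → K} {i j : ι}
    (ha : a ∈ W) (hb : b ∈ W) (hc : c ∈ W) (hai : a i ≠ 0) (hbi : b i = 0) (hbj : b j ≠ 0)
    (hci : c i = 0) (hcj : c j = 0) (hc0 : c ≠ 0) : 3 ≤ finrank K W := by
  have hind : LinearIndependent K ![a, b, c] := by
    rw [Fintype.linearIndependent_iff]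
    intro g hg
    simp only [Fin.sum_univ_three, Matrix.cons_val_zero, Matrix.cons_val_one,
      Matrix.cons_val_two] at hg
    have h0 : g 0 = 0 := by simpa [hbi, hci, hai] using congrFun hg i
    have h1 : g 1 = 0 := by simpa [h0, hcj, hbj] using congrFun hg j
    have h2 : g 2 = 0 := by simpa [h0, h1, hc0] using hg
    intro k
    fin_cases k <;> assumption
  calc 3 = finrank K (span K (Set.range ![a, b, c])) := by
        rw [finrank_span_eq_card hind, Fintype.card_fin]
    _ ≤ finrank K W := finrank_mono (span_le.2 (by simp [Set.insert_subset_iff, ha, hb, hc]))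

end Triangular

section CoordSpan

variable {K ι : Type*} [Field K] [DecidableEq ι]

variable (K) in
def coordSpan (s : Finset ι) : Submodule K (ι → K) :=
  span K ((fun i => Pi.single i 1) '' s)

theorem coordSpan_mono {s t : Finset ι} (h : s ⊆ t) : coordSpan K s ≤ coordSpan K t :=
  span_mono (Set.image_mono (by exact_mod_cast h))

theorem coordSpan_le_iff {s : Finset ι} {W : Submodule K (ι → K)} :
    coordSpan K s ≤ W ↔ ∀ i ∈ s, Pi.single i 1 ∈ W := by
  simp [coordSpan, span_le, Set.subset_def]

theorem coordSpan_insert_le_iff {s : Finset ι} {W : Submodule K (ι → K)} {i : ι} :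
    coordSpan K (insert i s) ≤ W ↔ Pi.single i 1 ∈ W ∧ coordSpan K s ≤ W := by
  simp [coordSpan_le_iff]

theorem finrank_coordSpan (s : Finset ι) : finrank K (coordSpan K s) = s.card := by
  rw [coordSpan, Set.image_eq_range, ← Fintype.card_coe s]
  exact finrank_span_eq_card
    ((Pi.linearIndependent_single_one ι K).comp ((↑) : s → ι) Subtype.val_injective)

variable [Fintype ι]

theorem mem_coordSpan {s : Finset ι} {x : ι → K} : x ∈ coordSpan K s ↔ ∀ i ∉ s, x i = 0 := by
  have hb : coordSpan K s = span K (Pi.basisFun K ι '' s) := by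
    simp only [coordSpan, Pi.basisFun_apply]
  rw [hb, Basis.mem_span_image]
  simp [Set.subset_def, Pi.basisFun_repr, not_imp_comm]

theorem eq_coordSpan_of_le {s : Finset ι} {W : Submodule K (ι → K)} (h : W ≤ coordSpan K s)
    (hW : s.card ≤ finrank K W) : W = coordSpan K s :=
  eq_of_le_of_finrank_le h (by rwa [finrank_coordSpan])

theorem coordSpan_eq_of_le {s : Finset ι} {W : Submodule K (ι → K)} (h : coordSpan K s ≤ W)
    (hW : finrank K W ≤ s.card) : coordSpan K s = W :=
  eq_of_le_of_finrank_le h (by rwa [finrank_coordSpan])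

theorem single_mem_of_apply_ne_zero {s : Finset ι} {W : Submodule K (ι → K)} {i : ι}
    {y : ι → K} (hs : coordSpan K s ≤ W) (hy : y ∈ W) (hys : y ∈ coordSpan K (insert i s))
    (hyi : y i ≠ 0) : Pi.single i 1 ∈ W := by
  have hrest : y - y i • Pi.single i 1 ∈ W := by
    refine hs (mem_coordSpan.2 fun j hj => ?_)
    by_cases hji : j = i
    · simp [hji]
    · simp [hji, mem_coordSpan.1 hys j (by simp [hji, hj])]
  exact (smul_mem_iff W hyi).1 (by simpa using sub_mem hy hrest)

theorem mem_coordSpan_of_apply_eq_zero {S T : Finset ι} {x : ι → K} {i : ι}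
    (hx : x ∈ coordSpan K S) (hST : S ⊆ insert i T) (hi : x i = 0) : x ∈ coordSpan K T := by
  refine mem_coordSpan.2 fun j hj => ?_
  by_cases hji : j = i
  · exact hji ▸ hi
  · exact mem_coordSpan.1 hx j fun h => by simpa [hji, hj] using hST h

theorem le_coordSpan_of_apply_eq_zero {S T : Finset ι} {W : Submodule K (ι → K)} {i : ι}
    (hW : W ≤ coordSpan K S) (hST : S ⊆ insert i T) (hi : ∀ x ∈ W, x i = 0) :
    W ≤ coordSpan K T :=
  fun x hx => mem_coordSpan_of_apply_eq_zero (hW hx) hST (hi x hx)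

theorem apply_eq_zero_of_coordSpan_le {s : Finset ι} {W : Submodule K (ι → K)} {x : ι → K}
    {i : ι} (h : coordSpan K s ≤ W) (hW : finrank K W ≤ s.card) (hx : x ∈ W) (hi : i ∉ s) :
    x i = 0 :=
  mem_coordSpan.1 ((coordSpan_eq_of_le h hW).symm ▸ hx) i hi

theorem eq_coordSpan_singleton_of_le {W W' : Submodule K (ι → K)} {i j : ι} (hWW' : W ≤ W')
    (hW : W ≤ coordSpan K {i, j}) (hj : Pi.single j 1 ∈ W') (hi : Pi.single i 1 ∉ W')
    (hrank : finrank K W = 1) : W = coordSpan K {j} := by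
  refine eq_coordSpan_of_le (le_coordSpan_of_apply_eq_zero hW (Finset.Subset.refl _)
    fun x hx => ?_) (by simp [hrank])
  by_contra hxi
  exact hi (single_mem_of_apply_ne_zero (coordSpan_le_iff.2 (by simpa using hj)) (hWW' hx)
    (hW hx) hxi)

theorem det_eq_zero_of_finrank_lt {S T : Finset ι} {W : Submodule K (ι → K)} {i j : ι}
    (hT : coordSpan K T ≤ W) (hWS : W ≤ coordSpan K S) (hS : S ⊆ insert i (insert j T))
    (hrank : finrank K W < S.card) : ∀ x ∈ W, ∀ y ∈ W, x i * y j - x j * y i = 0 := by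
  intro x hx y hy
  by_contra hdet
  -- otherwise `y j • x - x j • y` and `x i • y - y i • x` put `e i` and `e j` into `W`
  have hout : ∀ k ∉ insert i (insert j T), x k = 0 ∧ y k = 0 := fun k hk =>
    ⟨mem_coordSpan.1 (hWS hx) k fun h => hk (hS h), mem_coordSpan.1 (hWS hy) k fun h => hk (hS h)⟩
  have hi : Pi.single i 1 ∈ W := by
    refine single_mem_of_apply_ne_zero hT (sub_mem (smul_mem _ (y j) hx) (smul_mem _ (x j) hy))
      (mem_coordSpan.2 fun k hk => ?_) (by simpa [mul_comm] using hdet)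
    by_cases hkj : k = j
    · simp [hkj, mul_comm]
    · simp [hout k (by simp_all)]
  have hiT : coordSpan K (insert i T) ≤ W := coordSpan_insert_le_iff.2 ⟨hi, hT⟩
  have hj : Pi.single j 1 ∈ W :=
    single_mem_of_apply_ne_zero hiT (sub_mem (smul_mem _ (x i) hy) (smul_mem _ (y i) hx))
      (mem_coordSpan.2 fun k hk => by simp [hout k (by simp_all)])
      (by simpa [mul_comm] using hdet)
  have hSW : coordSpan K S ≤ W :=
    (coordSpan_mono (Finset.insert_comm i j T ▸ hS)).trans (coordSpan_insert_le_iff.2 ⟨hj, hiT⟩)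
  have := finrank_mono hSW
  rw [finrank_coordSpan] at this
  omega

theorem det_eq_zero_of_notMem_left {S : Finset ι} {W : Submodule K (ι → K)} {i j : ι}
    (hWS : W ≤ coordSpan K S) (hi : i ∉ S) : ∀ x ∈ W, ∀ y ∈ W, x i * y j - x j * y i = 0 := by
  intro x hx y hy
  simp [mem_coordSpan.1 (hWS hx) i hi, mem_coordSpan.1 (hWS hy) i hi]

theorem det_eq_zero_of_notMem_right {S : Finset ι} {W : Submodule K (ι → K)} {i j : ι}
    (hWS : W ≤ coordSpan K S) (hj : j ∉ S) : ∀ x ∈ W, ∀ y ∈ W, x i * y j - x j * y i = 0 := by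
  intro x hx y hy
  simp [mem_coordSpan.1 (hWS hx) j hj, mem_coordSpan.1 (hWS hy) j hj]

end CoordSpan

theorem eq_sum_smul_single_of_semilinear {K M ι : Type*} [Field K] [Fintype ι] [DecidableEq ι]
    [AddCommGroup M] [Module K M] {f : (ι → K) → M} {φ : K → K}
    (hadd : ∀ x y, f (x + y) = f x + f y) (hsmul : ∀ (c : K) x, f (c • x) = φ c • f x)
    (x : ι → K) : f x = ∑ i, φ (x i) • f (Pi.single i 1) := by
  calc f x = f (∑ i, x i • Pi.single i 1) := by rw [← pi_eq_sum_univ' x]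
    _ = ∑ i, f (x i • Pi.single i 1) := map_sum (AddMonoidHom.mk' f hadd) _ _
    _ = ∑ i, φ (x i) • f (Pi.single i 1) := by simp only [hsmul]

section Model

variable {K : Type*} [Field K] {φ ψ : K → K}

/-- `F` with `c ↦ cᵖ` replaced by an arbitrary `φ`; `modelV` is `V` with `ψ` for `c ↦ c^{1/p}`. -/
def modelF (φ : K → K) (x : Fin 6 → K) : Fin 6 → K := ![φ (x 1), 0, 0, 0, φ (x 2), φ (x 0)]

def modelV (ψ : K → K) (x : Fin 6 → K) : Fin 6 → K := ![0, 0, 0, -ψ (x 2), ψ (x 3), -ψ (x 1)]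

def stdForm (x y : Fin 6 → K) : K :=
  x 0 * y 3 - x 3 * y 0 + (x 1 * y 4 - x 4 * y 1) + (x 2 * y 5 - x 5 * y 2)

def IsStable (φ ψ : K → K) (W : Submodule K (Fin 6 → K)) : Prop :=
  ∀ x ∈ W, modelF φ x ∈ W ∧ modelV ψ x ∈ W

def IsTotallyIsotropic (W : Submodule K (Fin 6 → K)) : Prop :=
  ∀ x ∈ W, ∀ y ∈ W, stdForm x y = 0

/-- The cases (X), (Y₁), (Y₂), (Z₁), (Z₂), in this order. -/
def FlagCases (W1 W2 W3 : Submodule K (Fin 6 → K)) : Prop :=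
  (W2 = coordSpan K {4, 5} ∧ W3 ≤ coordSpan K {0, 3, 4, 5}) ∨
    (W1 = coordSpan K {4} ∧ W3 = coordSpan K {3, 4, 5}) ∨
    (W1 = coordSpan K {5} ∧ W3 = coordSpan K {0, 4, 5}) ∨
    (W1 = coordSpan K {5} ∧ W2 = coordSpan K {0, 5} ∧ W3 ≤ coordSpan K {0, 1, 4, 5}) ∨
    (W1 = coordSpan K {4} ∧ W2 = coordSpan K {3, 4} ∧ W3 ≤ coordSpan K {2, 3, 4, 5})

theorem eq_modelF_of_semilinear {F : (Fin 6 → K) → Fin 6 → K}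
    (hadd : ∀ x y, F (x + y) = F x + F y) (hsmul : ∀ (c : K) x, F (c • x) = φ c • F x)
    (h0 : F (Pi.single 0 1) = Pi.single 5 1) (h1 : F (Pi.single 1 1) = Pi.single 0 1)
    (h2 : F (Pi.single 2 1) = Pi.single 4 1) (h3 : F (Pi.single 3 1) = 0)
    (h4 : F (Pi.single 4 1) = 0) (h5 : F (Pi.single 5 1) = 0) : F = modelF φ := by
  funext x i
  rw [eq_sum_smul_single_of_semilinear hadd hsmul x]
  fin_cases i <;> simp [Fin.sum_univ_six, h0, h1, h2, h3, h4, h5, modelF]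

theorem eq_modelV_of_semilinear {V : (Fin 6 → K) → Fin 6 → K}
    (hadd : ∀ x y, V (x + y) = V x + V y) (hsmul : ∀ (c : K) x, V (c • x) = ψ c • V x)
    (h0 : V (Pi.single 0 1) = 0) (h1 : V (Pi.single 1 1) = -Pi.single 5 1)
    (h2 : V (Pi.single 2 1) = -Pi.single 3 1) (h3 : V (Pi.single 3 1) = Pi.single 4 1)
    (h4 : V (Pi.single 4 1) = 0) (h5 : V (Pi.single 5 1) = 0) : V = modelV ψ := by
  funext x i
  rw [eq_sum_smul_single_of_semilinear hadd hsmul x]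
  fin_cases i <;> simp [Fin.sum_univ_six, h0, h1, h2, h3, h4, h5, modelV]

theorem modelF_mem_coordSpan (hφ0 : φ 0 = 0) {s t : Finset (Fin 6)} {x : Fin 6 → K}
    (hx : x ∈ coordSpan K s) (hst : (1 ∈ s → 0 ∈ t) ∧ (2 ∈ s → 4 ∈ t) ∧ (0 ∈ s → 5 ∈ t)) :
    modelF φ x ∈ coordSpan K t := by
  rw [mem_coordSpan] at hx ⊢
  intro j hj
  fin_cases j <;> simp_all [modelF]

theorem modelV_mem_coordSpan (hψ0 : ψ 0 = 0) {s t : Finset (Fin 6)} {x : Fin 6 → K}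
    (hx : x ∈ coordSpan K s) (hst : (2 ∈ s → 3 ∈ t) ∧ (3 ∈ s → 4 ∈ t) ∧ (1 ∈ s → 5 ∈ t)) :
    modelV ψ x ∈ coordSpan K t := by
  rw [mem_coordSpan] at hx ⊢
  intro j hj
  fin_cases j <;> simp_all [modelV]

theorem le_coordSpan_of_isStable (hφ : ∀ c, φ c = 0 ↔ c = 0) (hψ : ∀ c, ψ c = 0 ↔ c = 0)
    {W : Submodule K (Fin 6 → K)} (hW : IsStable φ ψ W) (hrank : finrank K W ≤ 2) :
    W ≤ coordSpan K {0, 3, 4, 5} := by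
  intro x hx
  obtain ⟨hFx, hVx⟩ := hW x hx
  have hx1 : x 1 = 0 := by
    by_contra h1
    have := three_le_finrank_of_triangular hx hFx (hW _ hFx).1 (i := 1) (j := 0) h1 rfl
      ((hφ _).not.2 h1) rfl (by simp [modelF, hφ])
      fun h => by simpa [modelF, hφ, h1] using congrFun h 5
    omega
  have hx2 : x 2 = 0 := by
    by_contra h2
    have := three_le_finrank_of_triangular hx hVx (hW _ hVx).2 (i := 2) (j := 3) h2 rfl
      (by simpa [modelV, hψ] using h2) rfl (by simp [modelV, hψ])
      fun h => by simpa [modelV, hψ, h2] using congrFun h 4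
    omega
  refine mem_coordSpan.2 fun i hi => ?_
  fin_cases i <;> simp_all

theorem single_five_mem_of_isStable (hφ : ∀ c, φ c = 0 ↔ c = 0) {W : Submodule K (Fin 6 → K)}
    (hW : IsStable φ ψ W) (hWU : W ≤ coordSpan K {0, 3, 4, 5}) {x : Fin 6 → K} (hx : x ∈ W)
    (hx0 : x 0 ≠ 0) : Pi.single 5 1 ∈ W :=
  single_mem_of_apply_ne_zero (s := ∅) (by simp [coordSpan]) (hW x hx).1
    (modelF_mem_coordSpan ((hφ 0).2 rfl) (hWU hx) (by decide)) ((hφ _).not.2 hx0)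

theorem single_four_mem_of_isStable (hψ : ∀ c, ψ c = 0 ↔ c = 0) {W : Submodule K (Fin 6 → K)}
    (hW : IsStable φ ψ W) (hWU : W ≤ coordSpan K {0, 3, 4, 5}) {x : Fin 6 → K} (hx : x ∈ W)
    (hx3 : x 3 ≠ 0) : Pi.single 4 1 ∈ W :=
  single_mem_of_apply_ne_zero (s := ∅) (by simp [coordSpan]) (hW x hx).2
    (modelV_mem_coordSpan ((hψ 0).2 rfl) (hWU hx) (by decide)) ((hψ _).not.2 hx3)

theorem line_le_coordSpan_of_isStable (hφ : ∀ c, φ c = 0 ↔ c = 0) (hψ : ∀ c, ψ c = 0 ↔ c = 0)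
    {W : Submodule K (Fin 6 → K)} (hW : IsStable φ ψ W) (hWU : W ≤ coordSpan K {0, 3, 4, 5})
    (hrank : finrank K W = 1) : W ≤ coordSpan K {4, 5} := by
  have h0 : ∀ x ∈ W, x 0 = 0 := fun x hx => by
    by_contra hx0
    exact hx0 (apply_eq_zero_of_coordSpan_le (s := {5})
      (coordSpan_le_iff.2 (by simpa using single_five_mem_of_isStable hφ hW hWU hx hx0))
      (hrank.trans_le (by decide)) hx (by decide))
  have h3 : ∀ x ∈ W, x 3 = 0 := fun x hx => by
    by_contra hx3
    exact hx3 (apply_eq_zero_of_coordSpan_le (s := {4})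
      (coordSpan_le_iff.2 (by simpa using single_four_mem_of_isStable hψ hW hWU hx hx3))
      (hrank.trans_le (by decide)) hx (by decide))
  exact le_coordSpan_of_apply_eq_zero
    (le_coordSpan_of_apply_eq_zero (T := {3, 4, 5}) hWU (by decide) h0) (by decide) h3

theorem le_coordSpan_of_isStable_of_coordSpan_le (hφ : ∀ c, φ c = 0 ↔ c = 0)
    (hψ : ∀ c, ψ c = 0 ↔ c = 0) {W : Submodule K (Fin 6 → K)} (hW : IsStable φ ψ W)
    (h45 : coordSpan K {4, 5} ≤ W) (hrank : finrank K W = 3) : W ≤ coordSpan K {0, 3, 4, 5} := by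
  have huniv : W ≤ coordSpan K Finset.univ := fun x _ => mem_coordSpan.2 (by simp)
  have h2 : ∀ x ∈ W, x 2 = 0 := fun x hx => by
    by_contra hx2
    have h3 := single_mem_of_apply_ne_zero (i := 3) h45 (hW x hx).2
      (modelV_mem_coordSpan ((hψ 0).2 rfl) (huniv hx) (by decide)) (by simpa [modelV, hψ])
    exact hx2 (apply_eq_zero_of_coordSpan_le (coordSpan_insert_le_iff.2 ⟨h3, h45⟩)
      (hrank.trans_le (by decide)) hx (by decide))
  have h1 : ∀ x ∈ W, x 1 = 0 := fun x hx => by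
    by_contra hx1
    have h0 := single_mem_of_apply_ne_zero (i := 0) h45 (hW x hx).1
      (modelF_mem_coordSpan ((hφ 0).2 rfl) (huniv hx) (by decide)) ((hφ _).not.2 hx1)
    exact hx1 (apply_eq_zero_of_coordSpan_le (coordSpan_insert_le_iff.2 ⟨h0, h45⟩)
      (hrank.trans_le (by decide)) hx (by decide))
  exact le_coordSpan_of_apply_eq_zero
    (le_coordSpan_of_apply_eq_zero (T := {0, 1, 3, 4, 5}) huniv (by decide) h2) (by decide) h1

theorem flag_top_of_apply_zero_ne_zero (hφ : ∀ c, φ c = 0 ↔ c = 0)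
    {W2 W3 : Submodule K (Fin 6 → K)} (hW23 : W2 ≤ W3) (hd2 : finrank K W2 = 2)
    (hd3 : finrank K W3 = 3) (hiso : IsTotallyIsotropic W3) (h3 : IsStable φ ψ W3)
    (he5 : Pi.single 5 1 ∈ W2) (hW2 : W2 ≤ coordSpan K {0, 4, 5}) {u : Fin 6 → K}
    (hu : u ∈ W2) (hu0 : u 0 ≠ 0) :
    W3 = coordSpan K {0, 4, 5} ∨ W2 = coordSpan K {0, 5} ∧ W3 ≤ coordSpan K {0, 1, 4, 5} := by
  have hx2 : ∀ x ∈ W3, x 2 = 0 := fun x hx => by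
    simpa [stdForm] using hiso x hx _ (hW23 he5)
  have hu' := mem_coordSpan.1 (hW2 hu)
  have hxu : ∀ x ∈ W3, x 1 * u 4 = x 3 * u 0 := fun x hx => by
    have := hiso x hx u (hW23 hu)
    simp only [stdForm, hu' 1 (by decide), hu' 2 (by decide), hu' 3 (by decide), hx2 x hx] at this
    linear_combination this
  have hW3 : W3 ≤ coordSpan K {0, 1, 3, 4, 5} :=
    le_coordSpan_of_apply_eq_zero (S := Finset.univ) (i := 2)
      (fun x _ => mem_coordSpan.2 (by simp)) (by decide) hx2
  by_cases hw : ∀ w ∈ W3, w 1 = 0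
  · have hx3 : ∀ x ∈ W3, x 3 = 0 := fun x hx => by simpa [hw x hx, hu0] using hxu x hx
    exact Or.inl (eq_coordSpan_of_le (le_coordSpan_of_apply_eq_zero
      (le_coordSpan_of_apply_eq_zero hW3 (i := 1) (T := {0, 3, 4, 5}) (by decide) hw)
      (i := 3) (by decide) hx3) (by simp [hd3]))
  · push Not at hw
    obtain ⟨w, hw, hw1⟩ := hw
    have he0 : Pi.single 0 1 ∈ W3 := single_mem_of_apply_ne_zero (s := {5})
      (coordSpan_le_iff.2 (by simpa using hW23 he5)) (h3 w hw).1
      (modelF_mem_coordSpan ((hφ 0).2 rfl) (hW3 hw) (by decide)) ((hφ _).not.2 hw1)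
    have hx3 : ∀ x ∈ W3, x 3 = 0 := fun x hx => by
      simpa [stdForm] using hiso x hx _ he0
    have hu4 : u 4 = 0 := by simpa [hx3 w hw, hw1] using hxu w hw
    have he0' : Pi.single 0 1 ∈ W2 := single_mem_of_apply_ne_zero (s := {5})
      (coordSpan_le_iff.2 (by simpa using he5)) hu
      (mem_coordSpan_of_apply_eq_zero (hW2 hu) (i := 4) (by decide) hu4) hu0
    exact Or.inr ⟨(coordSpan_eq_of_le (coordSpan_le_iff.2 (by simp [he0', he5]))
      (hd2.trans_le (by decide))).symm, le_coordSpan_of_apply_eq_zero hW3 (i := 3) (by decide) hx3⟩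

theorem flag_top_of_apply_three_ne_zero (hψ : ∀ c, ψ c = 0 ↔ c = 0)
    {W2 W3 : Submodule K (Fin 6 → K)} (hW23 : W2 ≤ W3) (hd2 : finrank K W2 = 2)
    (hd3 : finrank K W3 = 3) (hiso : IsTotallyIsotropic W3) (h3 : IsStable φ ψ W3)
    (he4 : Pi.single 4 1 ∈ W2) (hW2 : W2 ≤ coordSpan K {3, 4, 5}) {v : Fin 6 → K}
    (hv : v ∈ W2) (hv3 : v 3 ≠ 0) :
    W3 = coordSpan K {3, 4, 5} ∨ W2 = coordSpan K {3, 4} ∧ W3 ≤ coordSpan K {2, 3, 4, 5} := by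
  have hx1 : ∀ x ∈ W3, x 1 = 0 := fun x hx => by
    simpa [stdForm] using hiso x hx _ (hW23 he4)
  have hv' := mem_coordSpan.1 (hW2 hv)
  have hxv : ∀ x ∈ W3, x 0 * v 3 + x 2 * v 5 = 0 := fun x hx => by
    have := hiso x hx v (hW23 hv)
    simp only [stdForm, hv' 0 (by decide), hv' 1 (by decide), hv' 2 (by decide), hx1 x hx] at this
    linear_combination this
  have hW3 : W3 ≤ coordSpan K {0, 2, 3, 4, 5} :=
    le_coordSpan_of_apply_eq_zero (S := Finset.univ) (i := 1)
      (fun x _ => mem_coordSpan.2 (by simp)) (by decide) hx1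
  by_cases hw : ∀ w ∈ W3, w 2 = 0
  · have hx0 : ∀ x ∈ W3, x 0 = 0 := fun x hx => by simpa [hw x hx, hv3] using hxv x hx
    exact Or.inl (eq_coordSpan_of_le (le_coordSpan_of_apply_eq_zero
      (le_coordSpan_of_apply_eq_zero hW3 (i := 0) (T := {2, 3, 4, 5}) (by decide) hx0)
      (i := 2) (by decide) hw) (by simp [hd3]))
  · push Not at hw
    obtain ⟨w, hw, hw2⟩ := hw
    have he3 : Pi.single 3 1 ∈ W3 := single_mem_of_apply_ne_zero (s := {4})
      (coordSpan_le_iff.2 (by simpa using hW23 he4)) (h3 w hw).2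
      (modelV_mem_coordSpan ((hψ 0).2 rfl) (hW3 hw) (by decide)) (by simpa [modelV, hψ])
    have hx0 : ∀ x ∈ W3, x 0 = 0 := fun x hx => by
      simpa [stdForm] using hiso x hx _ he3
    have hv5 : v 5 = 0 := by simpa [hx0 w hw, hw2] using hxv w hw
    have he3' : Pi.single 3 1 ∈ W2 := single_mem_of_apply_ne_zero (s := {4})
      (coordSpan_le_iff.2 (by simpa using he4)) hv
      (mem_coordSpan_of_apply_eq_zero (hW2 hv) (i := 5) (by decide) hv5) hv3
    exact Or.inr ⟨(coordSpan_eq_of_le (coordSpan_le_iff.2 (by simp [he3', he4]))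
      (hd2.trans_le (by decide))).symm, le_coordSpan_of_apply_eq_zero hW3 (i := 0) (by decide) hx0⟩

theorem flag_of_apply_zero_ne_zero (hφ : ∀ c, φ c = 0 ↔ c = 0) (hψ : ∀ c, ψ c = 0 ↔ c = 0)
    {W1 W2 W3 : Submodule K (Fin 6 → K)} (hW12 : W1 ≤ W2) (hW23 : W2 ≤ W3)
    (hd1 : finrank K W1 = 1) (hd2 : finrank K W2 = 2) (hd3 : finrank K W3 = 3)
    (hiso : IsTotallyIsotropic W3) (h1 : IsStable φ ψ W1) (h2 : IsStable φ ψ W2)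
    (h3 : IsStable φ ψ W3) (hW2U : W2 ≤ coordSpan K {0, 3, 4, 5}) {u : Fin 6 → K}
    (hu : u ∈ W2) (hu0 : u 0 ≠ 0) :
    W1 = coordSpan K {5} ∧
      (W3 = coordSpan K {0, 4, 5} ∨ W2 = coordSpan K {0, 5} ∧ W3 ≤ coordSpan K {0, 1, 4, 5}) := by
  have he5 : Pi.single 5 1 ∈ W2 := single_five_mem_of_isStable hφ h2 hW2U hu hu0
  have he4 : Pi.single 4 1 ∉ W2 := fun he4 => hu0 (apply_eq_zero_of_coordSpan_le (s := {4, 5})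
    (coordSpan_le_iff.2 (by simp [he4, he5])) (hd2.trans_le (by decide)) hu (by decide))
  have hW2 : W2 ≤ coordSpan K {0, 4, 5} := le_coordSpan_of_apply_eq_zero hW2U (i := 3)
    (by decide) fun x hx => by
      by_contra hx3
      exact he4 (single_four_mem_of_isStable hψ h2 hW2U hx hx3)
  exact ⟨eq_coordSpan_singleton_of_le hW12
      (line_le_coordSpan_of_isStable hφ hψ h1 (hW12.trans hW2U) hd1) he5 he4 hd1,
    flag_top_of_apply_zero_ne_zero hφ hW23 hd2 hd3 hiso h3 he5 hW2 hu hu0⟩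

theorem flag_of_apply_three_ne_zero (hφ : ∀ c, φ c = 0 ↔ c = 0) (hψ : ∀ c, ψ c = 0 ↔ c = 0)
    {W1 W2 W3 : Submodule K (Fin 6 → K)} (hW12 : W1 ≤ W2) (hW23 : W2 ≤ W3)
    (hd1 : finrank K W1 = 1) (hd2 : finrank K W2 = 2) (hd3 : finrank K W3 = 3)
    (hiso : IsTotallyIsotropic W3) (h1 : IsStable φ ψ W1) (h2 : IsStable φ ψ W2)
    (h3 : IsStable φ ψ W3) (hW2U : W2 ≤ coordSpan K {0, 3, 4, 5}) {v : Fin 6 → K}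
    (hv : v ∈ W2) (hv3 : v 3 ≠ 0) :
    W1 = coordSpan K {4} ∧
      (W3 = coordSpan K {3, 4, 5} ∨ W2 = coordSpan K {3, 4} ∧ W3 ≤ coordSpan K {2, 3, 4, 5}) := by
  have he4 : Pi.single 4 1 ∈ W2 := single_four_mem_of_isStable hψ h2 hW2U hv hv3
  have he5 : Pi.single 5 1 ∉ W2 := fun he5 => hv3 (apply_eq_zero_of_coordSpan_le (s := {4, 5})
    (coordSpan_le_iff.2 (by simp [he4, he5])) (hd2.trans_le (by decide)) hv (by decide))
  have hW2 : W2 ≤ coordSpan K {3, 4, 5} := le_coordSpan_of_apply_eq_zero hW2U (i := 0)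
    (by decide) fun x hx => by
      by_contra hx0
      exact he5 (single_five_mem_of_isStable hφ h2 hW2U hx hx0)
  exact ⟨eq_coordSpan_singleton_of_le hW12
      ((line_le_coordSpan_of_isStable hφ hψ h1 (hW12.trans hW2U) hd1).trans
        (coordSpan_mono (by decide))) he4 he5 hd1,
    flag_top_of_apply_three_ne_zero hψ hW23 hd2 hd3 hiso h3 he4 hW2 hv hv3⟩

theorem flag_cases_of_isStable (hφ : ∀ c, φ c = 0 ↔ c = 0) (hψ : ∀ c, ψ c = 0 ↔ c = 0)
    {W1 W2 W3 : Submodule K (Fin 6 → K)} (hW12 : W1 ≤ W2) (hW23 : W2 ≤ W3)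
    (hd1 : finrank K W1 = 1) (hd2 : finrank K W2 = 2) (hd3 : finrank K W3 = 3)
    (hiso : IsTotallyIsotropic W3) (h1 : IsStable φ ψ W1) (h2 : IsStable φ ψ W2)
    (h3 : IsStable φ ψ W3) : FlagCases W1 W2 W3 := by
  have hW2U := le_coordSpan_of_isStable hφ hψ h2 hd2.le
  by_cases hu : ∃ u ∈ W2, u 0 ≠ 0
  · obtain ⟨u, hu, hu0⟩ := hu
    obtain ⟨hW1, hY | hZ⟩ := flag_of_apply_zero_ne_zero hφ hψ hW12 hW23 hd1 hd2 hd3 hiso h1 h2 h3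
      hW2U hu hu0
    exacts [Or.inr (Or.inr (Or.inl ⟨hW1, hY⟩)), Or.inr (Or.inr (Or.inr (Or.inl ⟨hW1, hZ⟩)))]
  by_cases hv : ∃ v ∈ W2, v 3 ≠ 0
  · obtain ⟨v, hv, hv3⟩ := hv
    obtain ⟨hW1, hY | hZ⟩ := flag_of_apply_three_ne_zero hφ hψ hW12 hW23 hd1 hd2 hd3 hiso h1 h2
      h3 hW2U hv hv3
    exacts [Or.inr (Or.inl ⟨hW1, hY⟩), Or.inr (Or.inr (Or.inr (Or.inr ⟨hW1, hZ⟩)))]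
  push Not at hu hv
  have hW2 : W2 = coordSpan K {4, 5} := eq_coordSpan_of_le (le_coordSpan_of_apply_eq_zero
    (le_coordSpan_of_apply_eq_zero hW2U (i := 0) (T := {3, 4, 5}) (by decide) hu)
    (by decide) hv) (by simp [hd2])
  exact Or.inl ⟨hW2, le_coordSpan_of_isStable_of_coordSpan_le hφ hψ h3 (hW2 ▸ hW23) hd3⟩

theorem isStable_of_le_of_le (hφ0 : φ 0 = 0) (hψ0 : ψ 0 = 0) {s t : Finset (Fin 6)}
    {W : Submodule K (Fin 6 → K)} (hs : W ≤ coordSpan K s) (ht : coordSpan K t ≤ W)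
    (hst : ((1 ∈ s → 0 ∈ t) ∧ (2 ∈ s → 4 ∈ t) ∧ (0 ∈ s → 5 ∈ t)) ∧
      ((2 ∈ s → 3 ∈ t) ∧ (3 ∈ s → 4 ∈ t) ∧ (1 ∈ s → 5 ∈ t))) : IsStable φ ψ W :=
  fun _ hx => ⟨ht (modelF_mem_coordSpan hφ0 (hs hx) hst.1),
    ht (modelV_mem_coordSpan hψ0 (hs hx) hst.2)⟩

theorem isTotallyIsotropic_of_det {W : Submodule K (Fin 6 → K)}
    (h03 : ∀ x ∈ W, ∀ y ∈ W, x 0 * y 3 - x 3 * y 0 = 0)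
    (h14 : ∀ x ∈ W, ∀ y ∈ W, x 1 * y 4 - x 4 * y 1 = 0)
    (h25 : ∀ x ∈ W, ∀ y ∈ W, x 2 * y 5 - x 5 * y 2 = 0) : IsTotallyIsotropic W :=
  fun x hx y hy => by rw [stdForm, h03 x hx y hy, h14 x hx y hy, h25 x hx y hy]; ring

theorem isTotallyIsotropic_and_isStable_of_flag_cases (hφ0 : φ 0 = 0) (hψ0 : ψ 0 = 0)
    {W1 W2 W3 : Submodule K (Fin 6 → K)} (hW12 : W1 ≤ W2) (hW23 : W2 ≤ W3)
    (hd3 : finrank K W3 = 3)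
    (h : FlagCases W1 W2 W3) :
    IsTotallyIsotropic W3 ∧ IsStable φ ψ W1 ∧ IsStable φ ψ W2 ∧ IsStable φ ψ W3 := by
  have hbot : ∀ W : Submodule K (Fin 6 → K), coordSpan K ∅ ≤ W := by simp [coordSpan]
  have hrank : finrank K W3 < 4 := by omega
  rcases h with ⟨hW2, hW3⟩ | ⟨hW1, hW3⟩ | ⟨hW1, hW3⟩ | ⟨hW1, hW2, hW3⟩ | ⟨hW1, hW2, hW3⟩
  · exact ⟨isTotallyIsotropic_of_det
        (det_eq_zero_of_finrank_lt (hW2 ▸ hW23) hW3 (by decide) hrank)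
        (det_eq_zero_of_notMem_left hW3 (by decide))
        (det_eq_zero_of_notMem_left hW3 (by decide)),
      isStable_of_le_of_le hφ0 hψ0 (hW12.trans hW2.le) (hbot _) (by decide),
      isStable_of_le_of_le hφ0 hψ0 hW2.le (hbot _) (by decide),
      isStable_of_le_of_le hφ0 hψ0 hW3 (hW2 ▸ hW23) (by decide)⟩
  · exact ⟨isTotallyIsotropic_of_det (det_eq_zero_of_notMem_left hW3.le (by decide))
        (det_eq_zero_of_notMem_left hW3.le (by decide))
        (det_eq_zero_of_notMem_left hW3.le (by decide)),
      isStable_of_le_of_le hφ0 hψ0 hW1.le (hbot _) (by decide),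
      isStable_of_le_of_le hφ0 hψ0 (hW23.trans hW3.le) (hW1.ge.trans hW12) (by decide),
      isStable_of_le_of_le hφ0 hψ0 hW3.le (hW1.ge.trans (hW12.trans hW23)) (by decide)⟩
  · exact ⟨isTotallyIsotropic_of_det (det_eq_zero_of_notMem_right hW3.le (by decide))
        (det_eq_zero_of_notMem_left hW3.le (by decide))
        (det_eq_zero_of_notMem_left hW3.le (by decide)),
      isStable_of_le_of_le hφ0 hψ0 hW1.le (hbot _) (by decide),
      isStable_of_le_of_le hφ0 hψ0 (hW23.trans hW3.le) (hW1.ge.trans hW12) (by decide),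
      isStable_of_le_of_le hφ0 hψ0 hW3.le (hW1.ge.trans (hW12.trans hW23)) (by decide)⟩
  · exact ⟨isTotallyIsotropic_of_det (det_eq_zero_of_notMem_right hW3 (by decide))
        (det_eq_zero_of_finrank_lt (hW2 ▸ hW23) hW3 (by decide) hrank)
        (det_eq_zero_of_notMem_left hW3 (by decide)),
      isStable_of_le_of_le hφ0 hψ0 hW1.le (hbot _) (by decide),
      isStable_of_le_of_le hφ0 hψ0 hW2.le (hW1.ge.trans hW12) (by decide),
      isStable_of_le_of_le hφ0 hψ0 hW3 (hW2 ▸ hW23) (by decide)⟩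
  · exact ⟨isTotallyIsotropic_of_det (det_eq_zero_of_notMem_left hW3 (by decide))
        (det_eq_zero_of_notMem_left hW3 (by decide))
        (det_eq_zero_of_finrank_lt (hW2 ▸ hW23) hW3 (by decide) hrank),
      isStable_of_le_of_le hφ0 hψ0 hW1.le (hbot _) (by decide),
      isStable_of_le_of_le hφ0 hψ0 hW2.le (hW1.ge.trans hW12) (by decide),
      isStable_of_le_of_le hφ0 hψ0 hW3 (hW2 ▸ hW23) (by decide)⟩

end Model

theorem stmt15_general {p : ℕ} (hp : p.Prime) {𝔽 : Type*} [Field 𝔽] [IsAlgClosed 𝔽]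
    (e : Fin 6 → Fin 6 → 𝔽) (he : ∀ i, e i = Pi.single i 1)
    (B : (Fin 6 → 𝔽) → (Fin 6 → 𝔽) → 𝔽)
    (hB : ∀ x y, B x y = x 0 * y 3 - x 3 * y 0 + (x 1 * y 4 - x 4 * y 1)
      + (x 2 * y 5 - x 5 * y 2))
    (F V : (Fin 6 → 𝔽) → (Fin 6 → 𝔽))
    (hFadd : ∀ x y, F (x + y) = F x + F y)
    (hVadd : ∀ x y, V (x + y) = V x + V y)
    (hFsmul : ∀ (c : 𝔽) x, F (c • x) = c ^ p • F x)
    (hVsmul : ∀ (c : 𝔽) x, V (c ^ p • x) = c • V x)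
    (hF0 : F (e 0) = e 5) (hF1 : F (e 1) = e 0) (hF2 : F (e 2) = e 4)
    (hF3 : F (e 3) = 0) (hF4 : F (e 4) = 0) (hF5 : F (e 5) = 0)
    (hV0 : V (e 0) = 0) (hV1 : V (e 1) = -e 5) (hV2 : V (e 2) = -e 3)
    (hV3 : V (e 3) = e 4) (hV4 : V (e 4) = 0) (hV5 : V (e 5) = 0)
    (W1 W2 W3 : Submodule 𝔽 (Fin 6 → 𝔽)) (hW12 : W1 ≤ W2) (hW23 : W2 ≤ W3)
    (hd1 : Module.finrank 𝔽 W1 = 1) (hd2 : Module.finrank 𝔽 W2 = 2)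
    (hd3 : Module.finrank 𝔽 W3 = 3) :
    ((∀ x ∈ W3, ∀ y ∈ W3, B x y = 0) ∧
      (∀ x ∈ W1, F x ∈ W1 ∧ V x ∈ W1) ∧ (∀ x ∈ W2, F x ∈ W2 ∧ V x ∈ W2) ∧
      (∀ x ∈ W3, F x ∈ W3 ∧ V x ∈ W3)) ↔
    ((W2 = Submodule.span 𝔽 {e 4, e 5} ∧
        W3 ≤ Submodule.span 𝔽 {e 0, e 3, e 4, e 5}) ∨
      (W1 = Submodule.span 𝔽 {e 4} ∧ W3 = Submodule.span 𝔽 {e 3, e 4, e 5}) ∨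
      (W1 = Submodule.span 𝔽 {e 5} ∧ W3 = Submodule.span 𝔽 {e 0, e 4, e 5}) ∨
      (W1 = Submodule.span 𝔽 {e 5} ∧ W2 = Submodule.span 𝔽 {e 0, e 5} ∧
        W3 ≤ Submodule.span 𝔽 {e 0, e 1, e 4, e 5}) ∨
      (W1 = Submodule.span 𝔽 {e 4} ∧ W2 = Submodule.span 𝔽 {e 3, e 4} ∧
        W3 ≤ Submodule.span 𝔽 {e 2, e 3, e 4, e 5})) := by
  simp only [he] at hF0 hF1 hF2 hF3 hF4 hF5 hV0 hV1 hV2 hV3 hV4 hV5 ⊢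
  choose ρ hρ using fun c : 𝔽 => IsAlgClosed.exists_pow_nat_eq c hp.pos
  obtain rfl : F = modelF (· ^ p) :=
    eq_modelF_of_semilinear hFadd hFsmul hF0 hF1 hF2 hF3 hF4 hF5
  obtain rfl : V = modelV ρ :=
    eq_modelV_of_semilinear hVadd (fun c x => by rw [← hVsmul, hρ]) hV0 hV1 hV2 hV3 hV4 hV5
  obtain rfl : B = stdForm := funext₂ hB
  have hφ : ∀ c : 𝔽, c ^ p = 0 ↔ c = 0 := fun c => pow_eq_zero_iff hp.ne_zero
  have hψ : ∀ c : 𝔽, ρ c = 0 ↔ c = 0 := fun c =>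
    ⟨fun h => by rw [← hρ c, h, zero_pow hp.ne_zero], fun h => (hφ _).1 (h ▸ hρ 0)⟩
  have key : _ ↔ _ := ⟨fun ⟨hiso, h1, h2, h3⟩ =>
    flag_cases_of_isStable hφ hψ hW12 hW23 hd1 hd2 hd3 hiso h1 h2 h3,
    isTotallyIsotropic_and_isStable_of_flag_cases ((hφ 0).2 rfl) ((hψ 0).2 rfl) hW12 hW23 hd3⟩
  simp only [FlagCases, coordSpan, Finset.coe_insert, Finset.coe_singleton, Set.image_insert_eq,
    Set.image_singleton] at key
  exact key

/-- case `g = 3`, `w = s₂₃`. `𝔽^6` carries the standard basis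
`e 0, …, e 5` (`e_i = e (i-1)` in the paper's `1`-based numbering) and the standard
alternating form. `F` is the `σ`-semilinear map with `F e₁ = e₆`, `F e₂ = e₁`,
`F e₃ = e₅`, `F e₄ = F e₅ = F e₆ = 0`, and `V` the `σ⁻¹`-semilinear map with
`V e₁ = 0`, `V e₂ = -e₆`, `V e₃ = -e₄`, `V e₄ = e₅`, `V e₅ = V e₆ = 0`. A chain
`0 = W₀ ⊂ W₁ ⊂ W₂ ⊂ W₃` with `dim W_j = j` is a symplectic flag stable under `F` and
`V` iff one of the cases (X), (Y₁), (Y₂), (Z₁), (Z₂) below holds. -/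
theorem stmt15 {p : ℕ} (hp : p.Prime) {𝔽 : Type*} [Field 𝔽] [IsAlgClosed 𝔽] [CharP 𝔽 p]
    (e : Fin 6 → Fin 6 → 𝔽) (he : ∀ i, e i = Pi.single i 1)
    (B : (Fin 6 → 𝔽) → (Fin 6 → 𝔽) → 𝔽)
    (hB : ∀ x y, B x y = x 0 * y 3 - x 3 * y 0 + (x 1 * y 4 - x 4 * y 1)
      + (x 2 * y 5 - x 5 * y 2))
    (F V : (Fin 6 → 𝔽) → (Fin 6 → 𝔽))
    (hFadd : ∀ x y, F (x + y) = F x + F y)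
    (hVadd : ∀ x y, V (x + y) = V x + V y)
    (hFsmul : ∀ (c : 𝔽) x, F (c • x) = c ^ p • F x)
    (hVsmul : ∀ (c : 𝔽) x, V (c ^ p • x) = c • V x)
    (hF0 : F (e 0) = e 5) (hF1 : F (e 1) = e 0) (hF2 : F (e 2) = e 4)
    (hF3 : F (e 3) = 0) (hF4 : F (e 4) = 0) (hF5 : F (e 5) = 0)
    (hV0 : V (e 0) = 0) (hV1 : V (e 1) = -e 5) (hV2 : V (e 2) = -e 3)
    (hV3 : V (e 3) = e 4) (hV4 : V (e 4) = 0) (hV5 : V (e 5) = 0)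
    (W1 W2 W3 : Submodule 𝔽 (Fin 6 → 𝔽)) (hW12 : W1 ≤ W2) (hW23 : W2 ≤ W3)
    (hd1 : Module.finrank 𝔽 W1 = 1) (hd2 : Module.finrank 𝔽 W2 = 2)
    (hd3 : Module.finrank 𝔽 W3 = 3) :
    ((∀ x ∈ W3, ∀ y ∈ W3, B x y = 0) ∧
      (∀ x ∈ W1, F x ∈ W1 ∧ V x ∈ W1) ∧ (∀ x ∈ W2, F x ∈ W2 ∧ V x ∈ W2) ∧
      (∀ x ∈ W3, F x ∈ W3 ∧ V x ∈ W3)) ↔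
    ((W2 = Submodule.span 𝔽 {e 4, e 5} ∧
        W3 ≤ Submodule.span 𝔽 {e 0, e 3, e 4, e 5}) ∨
      (W1 = Submodule.span 𝔽 {e 4} ∧ W3 = Submodule.span 𝔽 {e 3, e 4, e 5}) ∨
      (W1 = Submodule.span 𝔽 {e 5} ∧ W3 = Submodule.span 𝔽 {e 0, e 4, e 5}) ∨
      (W1 = Submodule.span 𝔽 {e 5} ∧ W2 = Submodule.span 𝔽 {e 0, e 5} ∧
        W3 ≤ Submodule.span 𝔽 {e 0, e 1, e 4, e 5}) ∨
      (W1 = Submodule.span 𝔽 {e 4} ∧ W2 = Submodule.span 𝔽 {e 3, e 4} ∧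
        W3 ≤ Submodule.span 𝔽 {e 2, e 3, e 4, e 5})) :=
  stmt15_general hp e he B hB F V hFadd hVadd hFsmul hVsmul hF0 hF1 hF2 hF3 hF4 hF5 hV0 hV1 hV2 hV3
    hV4 hV5 W1 W2 W3 hW12 hW23 hd1 hd2 hd3
end

section
/- Let p be a prime and K an algebraically closed field of characteristic p. Then the homogeneous polynomial X₁^p·X₃ + X₂^{p+1} + X₁·X₃^p in the polynomial ring K[X₁, X₂, X₃] is irreducible. -/
/-!
Singling out `X₂`, the polynomial is `X₂ ^ (p + 1) + c` with `c = X₁ ^ p X₃ + X₁ X₃ ^ p` in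
`K[X₁, X₃][X₂]`. Since `c = X₁ (X₁ ^ (p - 1) X₃ + X₃ ^ p)` is divisible by the prime `X₁` exactly
once, this is Eisenstein at `X₁`.
-/

open MvPolynomial

namespace Polynomial

theorem irreducible_X_pow_add_C_of_prime_dvd {R : Type*} [CommRing R] [IsDomain R] {π c : R}
    (hπ : Prime π) (hc : π ∣ c) (hc2 : ¬ π ^ 2 ∣ c) {n : ℕ} (hn : n ≠ 0) :
    Irreducible (X ^ n + C c) := by
  have hP : (Ideal.span {π}).IsPrime := (Ideal.span_singleton_prime hπ.ne_zero).2 hπ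
  have hmonic : (X ^ n + C c).Monic := monic_X_pow_add_C c hn
  have hdeg : (X ^ n + C c).degree = (n : WithBot ℕ) :=
    degree_X_pow_add_C (Nat.pos_of_ne_zero hn) c
  refine irreducible_of_eisenstein_criterion hP ?_ ?_ ?_ ?_ hmonic.isPrimitive
  · rw [hmonic.leadingCoeff, Ideal.mem_span_singleton]
    exact hπ.not_dvd_one
  · intro k hk
    rw [hdeg, Nat.cast_lt] at hk
    rw [coeff_add, coeff_X_pow, if_neg hk.ne, coeff_C, zero_add, Ideal.mem_span_singleton]
    split_ifs
    exacts [hc, dvd_zero π]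
  · rw [hdeg]
    exact_mod_cast Nat.pos_of_ne_zero hn
  · rwa [coeff_add, coeff_X_pow, if_neg (Ne.symm hn), coeff_C_zero, zero_add,
      Ideal.span_singleton_pow, Ideal.mem_span_singleton]

end Polynomial

namespace MvPolynomial

variable {σ R : Type*} [CommRing R] {i j : σ} {p : ℕ}

theorem X_dvd_X_pow_mul_X_add_X_mul_X_pow (hp : p ≠ 0) :
    (X i : MvPolynomial σ R) ∣ X i ^ p * X j + X i * X j ^ p :=
  dvd_add ((dvd_pow_self _ hp).mul_right _) (dvd_mul_right _ _)

theorem not_X_sq_dvd_X_pow_mul_X_add_X_mul_X_pow [IsDomain R] (hij : i ≠ j) (hp : 2 ≤ p) :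
    ¬ (X i : MvPolynomial σ R) ^ 2 ∣ X i ^ p * X j + X i * X j ^ p := by
  intro h
  have h₁ : (X i : MvPolynomial σ R) ^ 2 ∣ X i ^ p * X j :=
    (pow_dvd_pow _ hp).mul_right _
  have h₂ : (X i : MvPolynomial σ R) ∣ X j ^ p := by
    rw [← mul_dvd_mul_iff_left (X_ne_zero i), ← sq]
    simpa using (dvd_add_right h₁).1 h
  exact hij (X_dvd_X.1 (X_prime.dvd_of_dvd_pow h₂))

end MvPolynomial

theorem stmt17_general {p : ℕ} (hp : p.Prime) {K : Type*} [Field K] :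
    Irreducible (X 0 ^ p * X 2 + X 1 ^ (p + 1) + X 0 * X 2 ^ p :
      MvPolynomial (Fin 3) K) := by
  set c : MvPolynomial (Fin 2) K := X 0 ^ p * X 1 + X 0 * X 1 ^ p
  have hQ : Irreducible (Polynomial.X ^ (p + 1) + Polynomial.C c) :=
    Polynomial.irreducible_X_pow_add_C_of_prime_dvd X_prime
      (X_dvd_X_pow_mul_X_add_X_mul_X_pow hp.ne_zero)
      (not_X_sq_dvd_X_pow_mul_X_add_X_mul_X_pow (by decide) hp.two_le) p.succ_ne_zero
  -- `finSuccEquiv` splits off the variable `0`, so first move `X 1` there.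
  rw [← MulEquiv.irreducible_iff (renameEquiv K (Equiv.swap (0 : Fin 3) 1)),
    ← MulEquiv.irreducible_iff (finSuccEquiv K 2)]
  convert hQ using 1
  have hswap : Equiv.swap (0 : Fin 3) 1 2 = 2 := by decide
  simp only [renameEquiv_apply, map_add, map_mul, map_pow, rename_X, Equiv.swap_apply_left,
    Equiv.swap_apply_right, hswap]
  have h1 : (1 : Fin 3) = Fin.succ 0 := rfl
  have h2 : (2 : Fin 3) = Fin.succ 1 := rfl
  simp only [h1, h2, finSuccEquiv_X_zero, finSuccEquiv_X_succ, c, map_add, map_mul, map_pow]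
  ring

/-- Let `p` be a prime and `K` an algebraically closed field of
characteristic `p`. Then the homogeneous polynomial `X₁ ^ p * X₃ + X₂ ^ (p+1) + X₁ * X₃ ^ p`
is irreducible in `K[X₁, X₂, X₃]`. -/
theorem stmt17 {p : ℕ} (hp : p.Prime) {K : Type*} [Field K] [IsAlgClosed K] [CharP K p] :
    Irreducible (X 0 ^ p * X 2 + X 1 ^ (p + 1) + X 0 * X 2 ^ p :
      MvPolynomial (Fin 3) K) :=
  stmt17_general hp
end

section
/- Let 𝔽 be a field of characteristic p > 0 and let x, y ∈ 𝔽 satisfy x^{p²} = x, y^{p²} = y and x^p + x + y^{p+1} = 0. Then for every b ∈ 𝔽 one has −(x^p − b·y^p) + (−b)^{p+1} − (x^p − b·y^p)^p = (y + b)^{p+1}; in particular, if b ≠ −y then −(x^p − b·y^p) + (−b)^{p+1} − (x^p − b·y^p)^p ≠ 0. -/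
/-!
The Frobenius `t ↦ t ^ p` is additive and, on `x` and `y`, an involution, so
`(x ^ p - b * y ^ p) ^ p = x - b ^ p * y`. The left-hand side is then
`b ^ (p + 1) + b * y ^ p + b ^ p * y - (x ^ p + x)`, and the curve equation turns `-(x ^ p + x)`
into `y ^ (p + 1)`, which gives `(y + b) * (y ^ p + b ^ p) = (y + b) ^ (p + 1)`.
-/

section ExpChar

variable {R : Type*} [CommRing R] {p : ℕ} [ExpChar R p]

theorem neg_pow_expChar_succ (b : R) : (-b) ^ (p + 1) = b ^ (p + 1) := by
  rw [neg_pow, pow_succ, neg_one_pow_expChar, neg_one_mul, neg_neg, one_mul]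

theorem sub_mul_pow_pow_expChar_of_pow_sq_eq {x y : R} (hx : x ^ p ^ 2 = x)
    (hy : y ^ p ^ 2 = y) (b : R) : (x ^ p - b * y ^ p) ^ p = x - b ^ p * y := by
  rw [sub_pow_expChar, mul_pow, ← pow_mul, ← pow_mul, ← pow_two, hx, hy]

theorem add_pow_expChar_succ_of_pow_add_self_add_pow_succ_eq_zero {x y : R}
    (hx : x ^ p ^ 2 = x) (hy : y ^ p ^ 2 = y) (hxy : x ^ p + x + y ^ (p + 1) = 0) (b : R) :
    -(x ^ p - b * y ^ p) + (-b) ^ (p + 1) - (x ^ p - b * y ^ p) ^ p = (y + b) ^ (p + 1) := by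
  rw [sub_mul_pow_pow_expChar_of_pow_sq_eq hx hy, neg_pow_expChar_succ, pow_succ (y + b),
    add_pow_expChar]
  linear_combination -hxy

end ExpChar

/-- Let `𝔽` be a field of characteristic `p > 0` and let `x, y ∈ 𝔽`
satisfy `x ^ (p²) = x`, `y ^ (p²) = y` and `x ^ p + x + y ^ (p+1) = 0`. Then for every
`b ∈ 𝔽`, `-(x^p - b y^p) + (-b)^(p+1) - (x^p - b y^p)^p = (y + b)^(p+1)`; in particular,
if `b ≠ -y` then the left-hand side is nonzero. -/
theorem stmt18 {p : ℕ} (hp : p.Prime) {𝔽 : Type*} [Field 𝔽] [CharP 𝔽 p]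
    (x y : 𝔽) (hx : x ^ p ^ 2 = x) (hy : y ^ p ^ 2 = y)
    (hxy : x ^ p + x + y ^ (p + 1) = 0) :
    ∀ b : 𝔽,
      (-(x ^ p - b * y ^ p) + (-b) ^ (p + 1) - (x ^ p - b * y ^ p) ^ p
          = (y + b) ^ (p + 1)) ∧
      (b ≠ -y →
        -(x ^ p - b * y ^ p) + (-b) ^ (p + 1) - (x ^ p - b * y ^ p) ^ p ≠ 0) := by
  have : Fact p.Prime := ⟨hp⟩
  intro b
  have key := add_pow_expChar_succ_of_pow_add_self_add_pow_succ_eq_zero hx hy hxy b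
  refine ⟨key, fun hb => key ▸ pow_ne_zero _ fun h => hb (eq_neg_of_add_eq_zero_right h)⟩
end
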